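/- arXiv:2012.05118 — 8 statements merged into one kernel-verified Lean document; each statement's English description precedes it below -/
import Mathlib

section
/- Upper bound of the total-variation cutoff for the one-sided transposition shuffle: for every real c > 0, limsup_{n→∞} ‖OST_n^{⌈n·log n + c·n⌉} − π_n‖_TV ≤ √2 · e^{−c}. -/
open scoped BigOperators

/-- The one-sided transposition shuffle on `S_n`:
`OST n σ = 1/(n·j)` if `σ = (i j)` with `1 ≤ i < j ≤ n` (here positions are the
elements of `Fin n`, so position `j` carries weight `1/(n(j+1))`), `OST n 1 = H_n/n`,
and `0` otherwise.  The convention `(i i) = e` makes the identity mass `H_n/n`. -/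
noncomputable def OST (n : ℕ) : Equiv.Perm (Fin n) → ℝ := fun σ =>
  ∑ j : Fin n, ∑ i : Fin n,
    if i ≤ j ∧ σ = Equiv.swap i j then ((n : ℝ) * (((j : ℕ) : ℝ) + 1))⁻¹ else 0

/-- Convolution of two distributions on `S_n`: `(P ⋆ Q)(g) = ∑_h P(g h⁻¹) Q(h)`. -/
noncomputable def convol {n : ℕ} (P Q : Equiv.Perm (Fin n) → ℝ) :
    Equiv.Perm (Fin n) → ℝ :=
  fun g => ∑ h : Equiv.Perm (Fin n), P (g * h⁻¹) * Q h

/-- `convPow P t` is the `t`-fold convolution `P^t` of `P` with itself. -/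
noncomputable def convPow {n : ℕ} (P : Equiv.Perm (Fin n) → ℝ) :
    ℕ → Equiv.Perm (Fin n) → ℝ
  | 0 => fun g => if g = 1 then 1 else 0
  | t + 1 => convol P (convPow P t)

/-- The uniform distribution `π_n` on `S_n`. -/
noncomputable def uniformPerm (n : ℕ) : Equiv.Perm (Fin n) → ℝ :=
  fun _ => ((Nat.factorial n : ℝ))⁻¹

/-- Total variation distance: `‖μ − ν‖_TV = (1/2) ∑_σ |μ σ − ν σ|`. -/
noncomputable def tvDist {n : ℕ} (μ ν : Equiv.Perm (Fin n) → ℝ) : ℝ :=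
  (1 / 2) * ∑ σ : Equiv.Perm (Fin n), |μ σ - ν σ|

/-!
Write `OST_n = (1/n) ∑_j R_j`, where `R_j` swaps position `j` with a uniformly chosen position
`i ≤ j`. The `R_j` pairwise commute, and `R_{n-1} ⋯ R_1 R_0` is the uniform distribution
(Fisher–Yates), which is absorbed by right multiplication with any probability distribution.
Hence a product `R_{j_1} ⋯ R_{j_t}` is uniform as soon as the positions `j_1, …, j_t` cover
`{0, …, n-1}`, and `‖OST_n^t − π_n‖_TV` is at most the coupon-collector tail
`n (1 - 1/n)^t ≤ n e^{-t/n}`, which is `≤ e^{-c}` once `t ≥ n log n + c n`.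
-/

open Finset MonoidAlgebra

namespace MonoidAlgebra

variable {G : Type*} [Monoid G]

noncomputable def mass : MonoidAlgebra ℝ G →ₐ[ℝ] ℝ := lift ℝ ℝ G 1

lemma mass_eq_sum_coeff [Fintype G] (P : MonoidAlgebra ℝ G) : mass P = ∑ g, P.coeff g := by
  simp [mass, lift_apply, Finsupp.sum_fintype]

variable (G) in
def probDistributions : Submonoid (MonoidAlgebra ℝ G) where
  carrier := {P | (∀ g, 0 ≤ P.coeff g) ∧ mass P = 1}
  mul_mem' := by
    classical
    rintro P Q ⟨hP, hP1⟩ ⟨hQ, hQ1⟩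
    refine ⟨fun g => ?_, by rw [map_mul, hP1, hQ1, one_mul]⟩
    rw [coeff_mul]
    refine Finset.sum_nonneg fun a _ => Finset.sum_nonneg fun b _ => ?_
    dsimp only
    split_ifs
    exacts [mul_nonneg (hP a) (hQ b), le_rfl]
  one_mem' := by
    classical
    refine ⟨fun g => ?_, map_one mass⟩
    rw [one_def, coeff_single, Finsupp.single_apply]
    split_ifs <;> norm_num

section Uniform

variable {G : Type*} [Group G] [Fintype G]

variable (G) in
noncomputable def uniform : MonoidAlgebra ℝ G := ∑ g, single g (Fintype.card G : ℝ)⁻¹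

lemma uniform_mem_probDistributions : uniform G ∈ probDistributions G := by
  classical
  refine ⟨fun g => ?_, ?_⟩
  · simp [uniform, Finsupp.single_apply]
  · simp [uniform, mass]

lemma uniform_mul_single (s : G) (c : ℝ) : uniform G * single s c = c • uniform G := by
  rw [uniform, Finset.sum_mul, Finset.smul_sum]
  exact Fintype.sum_equiv (Equiv.mulRight s) _ _ fun g => by
    simp [single_mul_single, smul_single, mul_comm]

lemma uniform_mul (P : MonoidAlgebra ℝ G) : uniform G * P = mass P • uniform G := by
  induction P using induction_linear with
  | zero => simp
  | add P Q hP hQ => rw [mul_add, hP, hQ, map_add, add_smul]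
  | single s c => simp [uniform_mul_single, mass]

lemma uniform_mul_of_mem {P : MonoidAlgebra ℝ G} (hP : P ∈ probDistributions G) :
    uniform G * P = uniform G := by
  rw [uniform_mul, hP.2, one_smul]

end Uniform

end MonoidAlgebra

lemma sum_pow_eq_sum_prod_ofFn {R ι : Type*} [Semiring R] [Fintype ι] (x : ι → R) :
    ∀ t : ℕ, (∑ i, x i) ^ t = ∑ f : Fin t → ι, (List.ofFn fun k => x (f k)).prod
  | 0 => by simp
  | t + 1 => by
    rw [pow_succ', sum_pow_eq_sum_prod_ofFn x t, Finset.sum_mul_sum, ← Fintype.sum_prod_type',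
      ← (Fin.consEquiv fun _ => ι).sum_comp]
    simp [List.ofFn_succ]

lemma card_filter_not_surjective_le {α β : Type*} [Fintype α] [Fintype β] [DecidableEq α]
    [DecidableEq β] :
    #{f : α → β | ¬ Function.Surjective f} ≤
      Fintype.card β * (Fintype.card β - 1) ^ Fintype.card α := by
  have hsub : ({f : α → β | ¬ Function.Surjective f} : Finset _) ⊆
      univ.biUnion fun b => Fintype.piFinset fun _ => univ.erase b := by
    intro f hf
    obtain ⟨b, hb⟩ := not_forall.1 (Finset.mem_filter.1 hf).2
    simpa [Fintype.mem_piFinset] using ⟨b, fun a h => hb ⟨a, h⟩⟩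
  refine (Finset.card_le_card hsub).trans (Finset.card_biUnion_le.trans ?_)
  simp [Fintype.card_piFinset, Finset.card_erase_of_mem]

lemma mul_one_sub_inv_pow_le_exp_neg {x c : ℝ} {t : ℕ} (hx : 1 ≤ x)
    (ht : x * Real.log x + c * x ≤ t) : x * (1 - x⁻¹) ^ t ≤ Real.exp (-c) := by
  have hx0 : 0 < x := zero_lt_one.trans_le hx
  calc x * (1 - x⁻¹) ^ t ≤ x * Real.exp (-x⁻¹) ^ t := by
        gcongr
        · exact sub_nonneg.2 (inv_le_one_of_one_le₀ hx)
        · linarith [Real.add_one_le_exp (-x⁻¹)]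
    _ = x * Real.exp (-(t / x)) := by rw [← Real.exp_nat_mul]; ring_nf
    _ ≤ x * Real.exp (-(Real.log x + c)) := by
        gcongr
        rw [le_div_iff₀ hx0]
        linarith
    _ = Real.exp (-c) := by
        rw [neg_add, Real.exp_add, Real.exp_neg, Real.exp_log hx0]
        field_simp

section TotalVariation

variable {n : ℕ}

lemma tvDist_nonneg (μ ν : Equiv.Perm (Fin n) → ℝ) : 0 ≤ tvDist μ ν := by
  unfold tvDist
  positivity

lemma tvDist_self (μ : Equiv.Perm (Fin n) → ℝ) : tvDist μ μ = 0 := by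
  simp [tvDist]

lemma tvDist_coeff_le_one {P Q : MonoidAlgebra ℝ (Equiv.Perm (Fin n))}
    (hP : P ∈ probDistributions _) (hQ : Q ∈ probDistributions _) :
    tvDist P.coeff Q.coeff ≤ 1 := by
  have h : ∀ σ, |P.coeff σ - Q.coeff σ| ≤ P.coeff σ + Q.coeff σ := fun σ =>
    abs_sub_le_iff.2 ⟨by linarith [hQ.1 σ], by linarith [hP.1 σ]⟩
  calc tvDist P.coeff Q.coeff ≤ 1 / 2 * ∑ σ, (P.coeff σ + Q.coeff σ) := by
        unfold tvDist
        gcongr with σ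
        exact h σ
    _ = 1 := by
        rw [Finset.sum_add_distrib, ← mass_eq_sum_coeff, ← mass_eq_sum_coeff, hP.2, hQ.2]
        norm_num

lemma tvDist_sum_mul_le {ι : Type*} (s : Finset ι) (w : ι → ℝ) (μ : ι → Equiv.Perm (Fin n) → ℝ)
    (ν : Equiv.Perm (Fin n) → ℝ) (hw : ∀ i ∈ s, 0 ≤ w i) (hw1 : ∑ i ∈ s, w i = 1) :
    tvDist (fun σ => ∑ i ∈ s, w i * μ i σ) ν ≤ ∑ i ∈ s, w i * tvDist (μ i) ν := by
  have h : ∀ σ, |∑ i ∈ s, w i * μ i σ - ν σ| ≤ ∑ i ∈ s, w i * |μ i σ - ν σ| := fun σ =>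
    calc |∑ i ∈ s, w i * μ i σ - ν σ| = |∑ i ∈ s, w i * (μ i σ - ν σ)| := by
          simp only [mul_sub, Finset.sum_sub_distrib, ← Finset.sum_mul, hw1, one_mul]
      _ ≤ ∑ i ∈ s, w i * |μ i σ - ν σ| := by
          refine (Finset.abs_sum_le_sum_abs _ _).trans (le_of_eq (Finset.sum_congr rfl ?_))
          intro i hi
          rw [abs_mul, abs_of_nonneg (hw i hi)]
  calc tvDist (fun σ => ∑ i ∈ s, w i * μ i σ) ν
      ≤ 1 / 2 * ∑ σ, ∑ i ∈ s, w i * |μ i σ - ν σ| := by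
        unfold tvDist
        gcongr with σ
        exact h σ
    _ = ∑ i ∈ s, w i * tvDist (μ i) ν := by
        simp only [tvDist, Finset.sum_comm (s := Finset.univ), Finset.mul_sum]
        refine Finset.sum_congr rfl fun i _ => Finset.sum_congr rfl fun σ _ => by ring

end TotalVariation

section GroupAlgebra

variable {n : ℕ}

lemma convol_coeff (P Q : MonoidAlgebra ℝ (Equiv.Perm (Fin n))) :
    convol P.coeff Q.coeff = (P * Q).coeff := by
  funext g
  rw [coeff_mul_apply_right]
  exact (Finsupp.sum_fintype _ _ (by simp)).symm

lemma convPow_coeff (P : MonoidAlgebra ℝ (Equiv.Perm (Fin n))) :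
    ∀ t, convPow P.coeff t = (P ^ t).coeff
  | 0 => by
    funext g
    simp [convPow, one_def, Finsupp.single_apply, eq_comm]
  | t + 1 => by rw [convPow, convPow_coeff P t, convol_coeff, pow_succ']

end GroupAlgebra

namespace OST

open Equiv

variable {n : ℕ}

noncomputable def step (j : Fin n) : MonoidAlgebra ℝ (Perm (Fin n)) :=
  ∑ i ∈ Iic j, single (swap i j) ((j : ℝ) + 1)⁻¹

noncomputable def alg (n : ℕ) : MonoidAlgebra ℝ (Perm (Fin n)) := (n : ℝ)⁻¹ • ∑ j, step j

def fixingFrom (n k : ℕ) : Finset (Perm (Fin n)) :=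
  univ.filter fun g => ∀ p : Fin n, k ≤ (p : ℕ) → g p = p

noncomputable def uniformFixingFrom (n k : ℕ) : MonoidAlgebra ℝ (Perm (Fin n)) :=
  ∑ g ∈ fixingFrom n k, single g (k.factorial : ℝ)⁻¹

lemma coeff_step_apply (j : Fin n) (σ : Perm (Fin n)) :
    (step j).coeff σ = ∑ i ∈ Iic j, if σ = swap i j then ((j : ℝ) + 1)⁻¹ else 0 := by
  simp [step, Finsupp.single_apply, eq_comm]

lemma OST_eq_coeff (n : ℕ) : OST n = (alg n).coeff := by
  funext σ
  simp only [OST, alg, coeff_smul_apply, coeff_sum, Finset.sum_apply', coeff_step_apply,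
    smul_eq_mul, Finset.mul_sum, ← Finset.sum_filter, ← Finset.filter_ge_eq_Iic,
    Finset.filter_filter, mul_inv]

lemma uniformPerm_eq_coeff (n : ℕ) : uniformPerm n = (uniform (Perm (Fin n))).coeff := by
  funext σ
  simp [uniformPerm, uniform, Finsupp.single_apply, Fintype.card_perm]

lemma step_mem_probDistributions (j : Fin n) : step j ∈ probDistributions (Perm (Fin n)) := by
  refine ⟨fun σ => ?_, ?_⟩
  · rw [coeff_step_apply]
    exact Finset.sum_nonneg fun i _ => by positivity
  · simp [step, mass, Fin.card_Iic, Nat.cast_add_one_ne_zero]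

lemma swap_apply_le_iff {i a b l : Fin n} (hia : i ≤ a) (hab : a ≤ b) :
    swap i a l ≤ b ↔ l ≤ b := by
  rw [swap_apply_def]
  split_ifs <;> grind

lemma swap_mul_swap_eq_of_ne {i a l b : Fin n} (hib : i ≠ b) (hab : a ≠ b) :
    swap i a * swap l b = swap (swap i a l) b * swap i a := by
  have h := swap_apply_apply (swap i a) l b
  rw [swap_apply_of_ne_of_ne hib.symm hab.symm] at h
  rw [h, inv_mul_cancel_right]

lemma step_mul_step_of_lt {a b : Fin n} (hab : a < b) : step a * step b = step b * step a := by
  simp only [step, Finset.sum_mul_sum, single_mul_single]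
  rw [Finset.sum_comm (s := Iic b)]
  refine Finset.sum_congr rfl fun i hi => ?_
  rw [Finset.mem_Iic] at hi
  refine Finset.sum_nbij' (swap i a) (swap i a) (fun l hl => ?_) (fun l hl => ?_)
    (fun l _ => swap_apply_self i a l) (fun l _ => swap_apply_self i a l) (fun l _ => ?_)
  · simpa [swap_apply_le_iff hi hab.le] using hl
  · simpa [swap_apply_le_iff hi hab.le] using hl
  · rw [swap_mul_swap_eq_of_ne (hi.trans_lt hab).ne hab.ne, mul_comm ((a : ℝ) + 1)⁻¹]

lemma step_commute (a b : Fin n) : Commute (step a) (step b) := by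
  rcases lt_trichotomy a b with h | rfl | h
  · exact step_mul_step_of_lt h
  · exact Commute.refl _
  · exact (step_mul_step_of_lt h).symm

lemma mem_fixingFrom {k : ℕ} {g : Perm (Fin n)} :
    g ∈ fixingFrom n k ↔ ∀ p : Fin n, k ≤ (p : ℕ) → g p = p := by
  simp [fixingFrom]

lemma uniformFixingFrom_zero : uniformFixingFrom n 0 = 1 := by
  have h : fixingFrom n 0 = {1} := by
    ext g
    simp only [mem_fixingFrom, zero_le, true_implies, Finset.mem_singleton, Perm.ext_iff,
      Perm.coe_one, id_eq]
  rw [uniformFixingFrom, h, Finset.sum_singleton, Nat.factorial_zero, Nat.cast_one, inv_one]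
  exact one_def.symm

lemma uniformFixingFrom_self : uniformFixingFrom n n = uniform (Perm (Fin n)) := by
  have h : fixingFrom n n = univ :=
    Finset.eq_univ_of_forall fun g => mem_fixingFrom.2 fun p hp => absurd p.isLt hp.not_gt
  simp [uniformFixingFrom, uniform, h, Fintype.card_perm]

lemma swap_mul_mem_fixingFrom_succ {i j : Fin n} {x : Perm (Fin n)} (hi : i ≤ j)
    (hx : x ∈ fixingFrom n j) : swap i j * x ∈ fixingFrom n (j + 1) := by
  refine mem_fixingFrom.2 fun p hp => ?_
  rw [Perm.mul_apply, mem_fixingFrom.1 hx p (by omega), swap_apply_of_ne_of_ne] <;>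
    (intro h; subst h; grind)

lemma apply_le_of_mem_fixingFrom_succ {j : Fin n} {g : Perm (Fin n)}
    (hg : g ∈ fixingFrom n (j + 1)) : g j ≤ j := by
  by_contra! h
  have := g.injective (mem_fixingFrom.1 hg (g j) h)
  rw [this] at h
  exact lt_irrefl _ h

lemma swap_apply_mul_mem_fixingFrom {j : Fin n} {g : Perm (Fin n)}
    (hg : g ∈ fixingFrom n (j + 1)) : swap (g j) j * g ∈ fixingFrom n j := by
  refine mem_fixingFrom.2 fun p hp => ?_
  rcases eq_or_ne p j with rfl | hpj
  · simp
  have hjp : j < p := lt_of_le_of_ne (Fin.le_def.2 hp) hpj.symm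
  rw [Perm.mul_apply, mem_fixingFrom.1 hg p hjp,
    swap_apply_of_ne_of_ne ((apply_le_of_mem_fixingFrom_succ hg).trans_lt hjp).ne' hpj]

lemma step_mul_uniformFixingFrom (j : Fin n) :
    step j * uniformFixingFrom n j = uniformFixingFrom n (j + 1) := by
  simp only [step, uniformFixingFrom, Finset.sum_mul_sum, single_mul_single,
    ← Finset.sum_product']
  refine Finset.sum_nbij' (fun p => swap p.1 j * p.2) (fun g => (g j, swap (g j) j * g))
    (fun p hp => ?_) (fun g hg => ?_) (fun p hp => ?_) (fun g _ => ?_) (fun p _ => ?_)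
  · rw [Finset.mem_product, Finset.mem_Iic] at hp
    exact swap_mul_mem_fixingFrom_succ hp.1 hp.2
  · exact Finset.mem_product.2
      ⟨Finset.mem_Iic.2 (apply_le_of_mem_fixingFrom_succ hg), swap_apply_mul_mem_fixingFrom hg⟩
  · rw [Finset.mem_product] at hp
    simp [mem_fixingFrom.1 hp.2 j le_rfl, ← mul_assoc]
  · simp [← mul_assoc]
  · simp [Nat.factorial_succ, mul_comm]

def descendingPositions (n : ℕ) : ℕ → List (Fin n)
  | 0 => []
  | k + 1 => if h : k < n then ⟨k, h⟩ :: descendingPositions n k else descendingPositions n k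

lemma mem_descendingPositions {k : ℕ} {j : Fin n} :
    j ∈ descendingPositions n k ↔ (j : ℕ) < k := by
  induction k with
  | zero => simp [descendingPositions]
  | succ k ih =>
    rw [descendingPositions]
    split_ifs with h
    · simp only [List.mem_cons, ih, Fin.ext_iff]
      omega
    · rw [ih]
      omega

lemma nodup_descendingPositions (k : ℕ) : (descendingPositions n k).Nodup := by
  induction k with
  | zero => exact List.nodup_nil
  | succ k ih =>
    rw [descendingPositions]
    split_ifs
    · exact ih.cons fun h => lt_irrefl k (mem_descendingPositions.1 h)
    · exact ih

lemma prod_map_step_descendingPositions {k : ℕ} (hk : k ≤ n) :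
    ((descendingPositions n k).map step).prod = uniformFixingFrom n k := by
  induction k with
  | zero => simp [descendingPositions, uniformFixingFrom_zero]
  | succ k ih =>
    rw [descendingPositions, dif_pos (Nat.lt_of_succ_le hk), List.map_cons, List.prod_cons,
      ih (by omega)]
    exact step_mul_uniformFixingFrom ⟨k, Nat.lt_of_succ_le hk⟩

theorem prod_map_step_eq_uniform {L : List (Fin n)} (hL : ∀ j, j ∈ L) :
    (L.map step).prod = uniform (Perm (Fin n)) := by
  -- The steps commute, so `L` may be reordered to begin with `descendingPositions n n`.
  obtain ⟨l, hlL, hsub⟩ := List.subperm_iff.1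
    ((nodup_descendingPositions n).subperm fun j _ => hL j)
  obtain ⟨rest, hrest⟩ := hsub.exists_perm_append
  have hcomm : (L.map step).Pairwise Commute :=
    List.pairwise_map.2 (List.pairwise_of_forall fun a b => step_commute a b)
  rw [((hlL.symm.trans hrest).map step).prod_eq' hcomm, List.map_append, List.prod_append,
    prod_map_step_descendingPositions le_rfl, uniformFixingFrom_self,
    uniform_mul_of_mem (Submonoid.list_prod_mem _ ?_)]
  simpa using fun j _ => step_mem_probDistributions j

noncomputable def stepProd {t : ℕ} (f : Fin t → Fin n) : MonoidAlgebra ℝ (Perm (Fin n)) :=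
  ((List.ofFn f).map step).prod

lemma stepProd_mem_probDistributions {t : ℕ} (f : Fin t → Fin n) :
    stepProd f ∈ probDistributions _ := by
  refine Submonoid.list_prod_mem _ fun P hP => ?_
  obtain ⟨j, -, rfl⟩ := List.mem_map.1 hP
  exact step_mem_probDistributions j

lemma stepProd_of_surjective {t : ℕ} {f : Fin t → Fin n} (hf : Function.Surjective f) :
    stepProd f = uniform (Perm (Fin n)) :=
  prod_map_step_eq_uniform fun j => List.mem_ofFn.2 (hf j)

lemma alg_pow (n t : ℕ) : alg n ^ t = ∑ f : Fin t → Fin n, ((n : ℝ)⁻¹ ^ t) • stepProd f := by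
  rw [alg, smul_pow, sum_pow_eq_sum_prod_ofFn, Finset.smul_sum]
  simp only [stepProd, List.map_ofFn, Function.comp_def]

theorem tvDist_convPow_le (hn : 0 < n) (t : ℕ) :
    tvDist (convPow (OST n) t) (uniformPerm n) ≤ n * (1 - (n : ℝ)⁻¹) ^ t := by
  set w : ℝ := (n : ℝ)⁻¹ ^ t
  have hw1 : ∑ _f : Fin t → Fin n, w = 1 := by
    simp [w, hn.ne']
  have hexp : convPow (OST n) t = fun σ => ∑ f : Fin t → Fin n, w * (stepProd f).coeff σ := by
    funext σ
    simp [OST_eq_coeff, convPow_coeff, alg_pow, w]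
  have hcard := card_filter_not_surjective_le (α := Fin t) (β := Fin n)
  rw [Fintype.card_fin, Fintype.card_fin] at hcard
  calc tvDist (convPow (OST n) t) (uniformPerm n)
      ≤ ∑ f : Fin t → Fin n, w * tvDist (stepProd f).coeff (uniformPerm n) := by
        rw [hexp]
        exact tvDist_sum_mul_le (ι := Fin t → Fin n) _ _ _ _ (fun _ _ => by positivity) hw1
    _ ≤ ∑ f : Fin t → Fin n, w * if Function.Surjective f then 0 else 1 := by
        gcongr with f
        rw [uniformPerm_eq_coeff]
        split_ifs with hf
        · rw [stepProd_of_surjective hf, tvDist_self]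
        · exact tvDist_coeff_le_one (stepProd_mem_probDistributions f)
            uniform_mem_probDistributions
    _ = w * #{f : Fin t → Fin n | ¬ Function.Surjective f} := by
        rw [← Finset.mul_sum, Finset.sum_ite, Finset.sum_const_zero, zero_add, Finset.sum_const,
          nsmul_one]
    _ ≤ w * (n * (n - 1 : ℕ) ^ t : ℕ) := by gcongr
    _ = n * (1 - (n : ℝ)⁻¹) ^ t := by
        rw [Nat.cast_mul, Nat.cast_pow, Nat.cast_sub hn, Nat.cast_one,
          show (1 : ℝ) - (n : ℝ)⁻¹ = (n - 1) / n by field_simp, div_pow]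
        simp only [w, inv_pow]
        ring

end OST

theorem ost_cutoff_upper_general (c : ℝ) :
    Filter.limsup
      (fun n : ℕ =>
        tvDist (convPow (OST n) ⌈(n : ℝ) * Real.log n + c * n⌉₊) (uniformPerm n))
      Filter.atTop ≤ Real.sqrt 2 * Real.exp (-c) := by
  refine Filter.limsup_le_of_le
    (Filter.isCoboundedUnder_le_of_le _ fun n => tvDist_nonneg _ _) ?_
  filter_upwards [Filter.eventually_gt_atTop 0] with n hn
  calc tvDist (convPow (OST n) ⌈(n : ℝ) * Real.log n + c * n⌉₊) (uniformPerm n)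
      ≤ n * (1 - (n : ℝ)⁻¹) ^ ⌈(n : ℝ) * Real.log n + c * n⌉₊ :=
        OST.tvDist_convPow_le hn _
    _ ≤ Real.exp (-c) :=
        mul_one_sub_inv_pow_le_exp_neg (Nat.one_le_cast.2 hn) (Nat.le_ceil _)
    _ ≤ Real.sqrt 2 * Real.exp (-c) :=
        le_mul_of_one_le_left (Real.exp_nonneg _) (Real.one_le_sqrt.2 one_le_two)

/-- Upper bound of the total-variation cutoff for the one-sided transposition shuffle:
for every `c > 0`,
`limsup_{n→∞} ‖OST_n^{⌈n log n + c n⌉} − π_n‖_TV ≤ √2 · e^{−c}`. -/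
theorem ost_cutoff_upper (c : ℝ) (hc : 0 < c) :
    Filter.limsup
      (fun n : ℕ =>
        tvDist (convPow (OST n) ⌈(n : ℝ) * Real.log n + c * n⌉₊) (uniformPerm n))
      Filter.atTop ≤ Real.sqrt 2 * Real.exp (-c) :=
  ost_cutoff_upper_general c
end

section
/- Swapping lemma: let λ ⊢ n, let T be a Young tableau of shape λ, and let (i₁,j₁) ≠ (i₂,j₂) be cells of λ with T(i₁,j₁) < T(i₂,j₂). Let S be the Young tableau of shape λ obtained from T by interchanging the entries in these two cells. Then eig(S) − eig(T) = (((i₁−i₂)+(j₂−j₁))/n) · (1/T(i₁,j₁) − 1/T(i₂,j₂)). In particular, eig(S) − eig(T) ≥ 0 if (i₁−i₂)+(j₂−j₁) ≥ 0, and eig(S) − eig(T) < 0 if (i₁−i₂)+(j₂−j₁) < 0. -/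
open scoped BigOperators

/-- The eigenvalue statistic of a tableau-filling `T` of the Young diagram `μ`:
`eig(T) = (1/n) ∑_{(i,j)∈μ} (j-i+1)/T(i,j)` (cells are 0-indexed, which leaves
the quantity `j-i+1` unchanged). -/
noncomputable def eig (μ : YoungDiagram) (T : ℕ × ℕ → ℕ) : ℝ :=
  (μ.card : ℝ)⁻¹ * ∑ c ∈ μ.cells, (((c.2 : ℝ) - (c.1 : ℝ) + 1) / (T c : ℝ))

/-- `T` is a Young tableau of shape `μ`: a bijection from the cells of `μ` onto `{1,…,n}`. -/
def IsYT (μ : YoungDiagram) (T : ℕ × ℕ → ℕ) : Prop :=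
  Set.BijOn T (μ.cells : Set (ℕ × ℕ)) (Finset.Icc 1 μ.card : Set ℕ)

/-- Swapping lemma: interchanging the entries of a Young tableau `T` at two cells
`c₁ ≠ c₂` with `T c₁ < T c₂` changes the eigenvalue by
`(((i₁−i₂)+(j₂−j₁))/n) · (1/T c₁ − 1/T c₂)`; in particular the change is nonnegative when
`(i₁−i₂)+(j₂−j₁) ≥ 0` and negative when `(i₁−i₂)+(j₂−j₁) < 0`. -/
theorem eig_swap (n : ℕ) (μ : YoungDiagram) (hcard : μ.card = n)
    (T : ℕ × ℕ → ℕ) (hT : IsYT μ T)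
    (c₁ c₂ : ℕ × ℕ) (h₁ : c₁ ∈ μ) (h₂ : c₂ ∈ μ) (hne : c₁ ≠ c₂) (hlt : T c₁ < T c₂)
    (S : ℕ × ℕ → ℕ)
    (hS : S = Function.update (Function.update T c₁ (T c₂)) c₂ (T c₁)) :
    eig μ S - eig μ T =
        ((((c₁.1 : ℝ) - (c₂.1 : ℝ)) + ((c₂.2 : ℝ) - (c₁.2 : ℝ))) / (n : ℝ)) *
          (1 / (T c₁ : ℝ) - 1 / (T c₂ : ℝ)) ∧
      (0 ≤ ((c₁.1 : ℝ) - (c₂.1 : ℝ)) + ((c₂.2 : ℝ) - (c₁.2 : ℝ)) →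
        0 ≤ eig μ S - eig μ T) ∧
      (((c₁.1 : ℝ) - (c₂.1 : ℝ)) + ((c₂.2 : ℝ) - (c₁.2 : ℝ)) < 0 →
        eig μ S - eig μ T < 0) := by
  -- basic facts about the entries
  have hT1 : T c₁ ∈ Finset.Icc 1 μ.card := hT.mapsTo h₁
  have hT2 : T c₂ ∈ Finset.Icc 1 μ.card := hT.mapsTo h₂
  have hT1' : 1 ≤ T c₁ := (Finset.mem_Icc.mp hT1).1
  have hT2' : T c₂ ≤ μ.card := (Finset.mem_Icc.mp hT2).2
  have hnpos : 0 < n := by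
    have : 1 ≤ μ.card := le_trans hT1' (le_of_lt (lt_of_lt_of_le hlt hT2'))
    omega
  have hT1R : (0:ℝ) < (T c₁ : ℝ) := by exact_mod_cast hT1'
  have hT2R : (0:ℝ) < (T c₂ : ℝ) := lt_trans hT1R (by exact_mod_cast hlt)
  have hnR : (0:ℝ) < (n : ℝ) := by exact_mod_cast hnpos
  -- values of S
  have hS1 : S c₁ = T c₂ := by
    rw [hS, Function.update_of_ne hne, Function.update_self]
  have hS2 : S c₂ = T c₁ := by rw [hS, Function.update_self]
  have hSother : ∀ c, c ≠ c₁ → c ≠ c₂ → S c = T c := by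
    intro c h1 h2
    rw [hS, Function.update_of_ne h2, Function.update_of_ne h1]
  -- decompose the cells
  set s := μ.cells \ {c₁, c₂} with hsdef
  have hc2s : c₂ ∉ s := by simp [hsdef]
  have hc1s : c₁ ∉ insert c₂ s := by
    simp [hsdef, hne]
  have hcells : μ.cells = insert c₁ (insert c₂ s) := by
    ext c
    simp only [hsdef, Finset.mem_insert, Finset.mem_sdiff, Finset.mem_insert,
      Finset.mem_singleton, not_or]
    constructor
    · intro hc
      by_cases e1 : c = c₁
      · exact Or.inl e1
      by_cases e2 : c = c₂
      · exact Or.inr (Or.inl e2)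
      · exact Or.inr (Or.inr ⟨hc, e1, e2⟩)
    · rintro (rfl | rfl | ⟨hc, -⟩)
      · exact h₁
      · exact h₂
      · exact hc
  have hsum : ∀ f : (ℕ × ℕ) → ℕ,
      ∑ c ∈ μ.cells, (((c.2 : ℝ) - (c.1 : ℝ) + 1) / (f c : ℝ)) =
        (((c₁.2 : ℝ) - (c₁.1 : ℝ) + 1) / (f c₁ : ℝ)) +
        (((c₂.2 : ℝ) - (c₂.1 : ℝ) + 1) / (f c₂ : ℝ)) +
        ∑ c ∈ s, (((c.2 : ℝ) - (c.1 : ℝ) + 1) / (f c : ℝ)) := by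
    intro f
    rw [hcells, Finset.sum_insert hc1s, Finset.sum_insert hc2s]
    ring
  have hsame : ∑ c ∈ s, (((c.2 : ℝ) - (c.1 : ℝ) + 1) / (S c : ℝ)) =
      ∑ c ∈ s, (((c.2 : ℝ) - (c.1 : ℝ) + 1) / (T c : ℝ)) := by
    apply Finset.sum_congr rfl
    intro c hc
    simp only [hsdef, Finset.mem_sdiff, Finset.mem_insert, Finset.mem_singleton, not_or] at hc
    rw [hSother c hc.2.1 hc.2.2]
  have hmain : eig μ S - eig μ T =
      ((((c₁.1 : ℝ) - (c₂.1 : ℝ)) + ((c₂.2 : ℝ) - (c₁.2 : ℝ))) / (n : ℝ)) *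
        (1 / (T c₁ : ℝ) - 1 / (T c₂ : ℝ)) := by
    unfold eig
    rw [hsum S, hsum T, hsame, hS1, hS2, hcard]
    field_simp
    ring
  refine ⟨hmain, ?_, ?_⟩
  · intro hw
    rw [hmain]
    have h1 : 0 ≤ 1 / (T c₁ : ℝ) - 1 / (T c₂ : ℝ) := by
      have : 1 / (T c₂ : ℝ) ≤ 1 / (T c₁ : ℝ) := by
        apply one_div_le_one_div_of_le hT1R
        exact_mod_cast le_of_lt hlt
      linarith
    exact mul_nonneg (div_nonneg hw (le_of_lt hnR)) h1
  · intro hw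
    rw [hmain]
    have h1 : 0 < 1 / (T c₁ : ℝ) - 1 / (T c₂ : ℝ) := by
      have : 1 / (T c₂ : ℝ) < 1 / (T c₁ : ℝ) := by
        apply one_div_lt_one_div_of_lt hT1R
        exact_mod_cast hlt
      linarith
    exact mul_neg_of_neg_of_pos (div_neg_of_neg_of_pos hw hnR) h1
end

section
/- For every partition λ ⊢ n and every standard Young tableau T of shape λ, the corresponding eigenvalue is bounded by those of the special tableaux: eig(T_λ^↓) ≤ eig(T) ≤ eig(T_λ^→). -/
open scoped BigOperators

/-- `T` is a standard Young tableau of shape `μ`: a Young tableau whose entries increase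
along rows and down columns. -/
def IsSYT (μ : YoungDiagram) (T : ℕ × ℕ → ℕ) : Prop :=
  IsYT μ T ∧
    (∀ i j₁ j₂ : ℕ, (i, j₁) ∈ μ → (i, j₂) ∈ μ → j₁ < j₂ → T (i, j₁) < T (i, j₂)) ∧
    (∀ i₁ i₂ j : ℕ, (i₁, j) ∈ μ → (i₂, j) ∈ μ → i₁ < i₂ → T (i₁, j) < T (i₂, j))

/-- The row-reading tableau `T_λ^→`: entries `1,…,n` inserted along rows, left to right,
top row first.  The value at a cell is its (1-indexed) rank in row-major order. -/
def rowTab (μ : YoungDiagram) : ℕ × ℕ → ℕ := fun c =>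
  (μ.cells.filter (fun c' => c'.1 < c.1 ∨ (c'.1 = c.1 ∧ c'.2 ≤ c.2))).card

/-- The column-reading tableau `T_λ^↓`: entries `1,…,n` inserted down columns, top to bottom,
leftmost column first. -/
def colTab (μ : YoungDiagram) : ℕ × ℕ → ℕ := fun c =>
  (μ.cells.filter (fun c' => c'.2 < c.2 ∨ (c'.2 = c.2 ∧ c'.1 ≤ c.1))).card

/-!
Since `1 / t = ∑_{t ≤ m ≤ n} (1 / m - 1 / (m + 1)) + 1 / (n + 1)`, the quantity `n · eig(T)` is a
nonnegative combination of the sums `∑ (j - i + 1)` over the subdiagrams `μ_m ⊆ μ` of cells holding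
`1, …, m`, plus a term that does not depend on `T`; so it suffices to compare these sums for each
`m`. The row-reading tableau fills rows greedily, so its `μ_m` dominates every other subdiagram of
`μ` of size `m`, and summation by parts shows that `∑ (j - i + 1)` increases along the dominance
order. For the lower bound, transpose: `eig μ T + eig μᵀ (T ∘ swap) = (2 / n) ∑_{k ≤ n} 1 / k` for
every Young tableau `T`, and the column-reading tableau of `μ` is the transpose of the row-reading
tableau of `μᵀ`.
-/

open Finset

section Abel

variable {R : Type*} [CommRing R] [LinearOrder R] [IsOrderedRing R]

theorem sum_mul_nonneg_of_antitone {d c : ℕ → R} {N : ℕ}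
    (hd : ∀ k, 0 ≤ ∑ i ∈ range k, d i) (hdN : ∑ i ∈ range N, d i = 0) (hc : Antitone c) :
    0 ≤ ∑ i ∈ range N, d i * c i := by
  have h := sum_range_by_parts c d N
  simp only [smul_eq_mul] at h
  simp_rw [mul_comm (d _)]
  rw [h, hdN, mul_zero, zero_sub, neg_nonneg]
  exact sum_nonpos fun i _ =>
    mul_nonpos_of_nonpos_of_nonneg (sub_nonpos.2 (hc i.le_succ)) (hd (i + 1))

end Abel

theorem sum_range_cast_sub_add_one (r i : ℕ) :
    ∑ j ∈ range r, ((j : ℝ) - i + 1) = r * (r + 1) / 2 - r * i := by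
  induction r with
  | zero => simp
  | succ r ih => rw [sum_range_succ, ih]; push_cast; ring

theorem one_div_eq_sum_Icc_sub_add {t n : ℕ} (ht : t ≤ n) :
    1 / (t : ℝ) = ∑ m ∈ Icc t n, (1 / (m : ℝ) - 1 / (m + 1 : ℝ)) + 1 / (n + 1 : ℝ) := by
  have h := sum_Icc_sub ht (fun m : ℕ => 1 / (m : ℝ))
  simp only [Nat.cast_add, Nat.cast_one] at h
  have h' : ∑ m ∈ Icc t n, (1 / (m : ℝ) - 1 / (m + 1 : ℝ))
      = -∑ m ∈ Icc t n, (1 / (m + 1 : ℝ) - 1 / m) := by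
    rw [← sum_neg_distrib]; simp only [neg_sub]
  linarith

section LayerCake

variable {ι : Type*} (s : Finset ι) (g : ι → ℝ) {n : ℕ}

theorem sum_div_eq_sum_mul_sum_filter {T : ι → ℕ} (hT : ∀ c ∈ s, T c ∈ Icc 1 n) :
    ∑ c ∈ s, g c / T c
      = ∑ m ∈ Icc 1 n, (1 / (m : ℝ) - 1 / (m + 1 : ℝ)) * ∑ c ∈ s with T c ≤ m, g c
        + (∑ c ∈ s, g c) / (n + 1) := by
  have hc : ∀ c ∈ s, g c / T c = ∑ m ∈ Icc 1 n,
      (if T c ≤ m then (1 / (m : ℝ) - 1 / (m + 1 : ℝ)) * g c else 0) + g c / (n + 1) := by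
    intro c hc
    obtain ⟨hT1, hTn⟩ := mem_Icc.1 (hT c hc)
    have hIcc : {m ∈ Icc 1 n | T c ≤ m} = Icc (T c) n := by
      ext m; simp only [mem_filter, mem_Icc]; omega
    rw [← sum_filter, hIcc, ← sum_mul, div_eq_mul_one_div, one_div_eq_sum_Icc_sub_add hTn]
    ring
  rw [sum_congr rfl hc, sum_add_distrib, sum_comm, sum_div]
  simp only [sum_ite, sum_const_zero, add_zero, ← mul_sum]

theorem sum_div_le_sum_div_of_sum_filter_le {T T' : ι → ℕ} (hT : ∀ c ∈ s, T c ∈ Icc 1 n)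
    (hT' : ∀ c ∈ s, T' c ∈ Icc 1 n)
    (h : ∀ m ∈ Icc 1 n, ∑ c ∈ s with T c ≤ m, g c ≤ ∑ c ∈ s with T' c ≤ m, g c) :
    ∑ c ∈ s, g c / T c ≤ ∑ c ∈ s, g c / T' c := by
  rw [sum_div_eq_sum_mul_sum_filter s g hT, sum_div_eq_sum_mul_sum_filter s g hT']
  gcongr ?_ + _
  refine sum_le_sum fun m hm => mul_le_mul_of_nonneg_left (h m hm) ?_
  have hm : (1 : ℝ) ≤ m := by exact_mod_cast (mem_Icc.1 hm).1
  rw [sub_nonneg]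
  exact one_div_le_one_div_of_le (by linarith) (by linarith)

end LayerCake

namespace YoungDiagram

variable (ν : YoungDiagram)

theorem fst_lt_colLen_zero {c : ℕ × ℕ} (hc : c ∈ ν) : c.1 < ν.colLen 0 :=
  mem_iff_lt_colLen.1 (ν.up_left_mem le_rfl (Nat.zero_le c.2) hc)

theorem card_filter_fst_lt (k : ℕ) :
    #{c ∈ ν.cells | c.1 < k} = ∑ i ∈ range k, ν.rowLen i := by
  rw [card_eq_sum_card_fiberwise (f := Prod.fst) (t := range k)
    fun c hc => mem_range.2 (mem_filter.1 hc).2]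
  refine sum_congr rfl fun i hi => ?_
  rw [rowLen_eq_card, row, filter_filter]
  congr 1
  exact filter_congr fun c _ => ⟨fun h => h.2, fun h => ⟨h ▸ mem_range.1 hi, h⟩⟩

theorem card_eq_sum_rowLen {N : ℕ} (hN : ν.colLen 0 ≤ N) :
    ν.card = ∑ i ∈ range N, ν.rowLen i := by
  rw [← card_filter_fst_lt, filter_true_of_mem fun c hc => (ν.fst_lt_colLen_zero hc).trans_le hN]

theorem sum_cells_eq_sum_rows {M : Type*} [AddCommMonoid M] (f : ℕ × ℕ → M) {N : ℕ}
    (hN : ν.colLen 0 ≤ N) :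
    ∑ c ∈ ν.cells, f c = ∑ i ∈ range N, ∑ j ∈ range (ν.rowLen i), f (i, j) := by
  rw [← sum_fiberwise_of_maps_to (g := Prod.fst) (t := range N)
    fun c hc => mem_range.2 ((ν.fst_lt_colLen_zero hc).trans_le hN)]
  refine sum_congr rfl fun i _ => ?_
  rw [← row, row_eq_prod, sum_product, sum_singleton]

theorem transpose_cells : ν.transpose.cells = ν.cells.map (Equiv.prodComm ℕ ℕ).toEmbedding :=
  Equiv.finsetCongr_apply _ _

theorem card_transpose : ν.transpose.card = ν.card := by
  rw [YoungDiagram.card, transpose_cells, card_map]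

theorem sum_cells_transpose {M : Type*} [AddCommMonoid M] (f : ℕ × ℕ → M) :
    ∑ c ∈ ν.transpose.cells, f c = ∑ c ∈ ν.cells, f c.swap := by
  rw [transpose_cells, sum_map]
  rfl

theorem sum_cells_le_of_dominates {ν ρ : YoungDiagram}
    (hdom : ∀ k, ∑ i ∈ range k, ν.rowLen i ≤ ∑ i ∈ range k, ρ.rowLen i)
    (hcard : ν.card = ρ.card) :
    ∑ c ∈ ν.cells, ((c.2 : ℝ) - c.1 + 1) ≤ ∑ c ∈ ρ.cells, ((c.2 : ℝ) - c.1 + 1) := by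
  set N := max (ν.colLen 0) (ρ.colLen 0)
  have hν : ν.colLen 0 ≤ N := le_max_left _ _
  have hρ : ρ.colLen 0 ≤ N := le_max_right _ _
  rw [ν.sum_cells_eq_sum_rows _ hν, ρ.sum_cells_eq_sum_rows _ hρ, ← sub_nonneg, ← sum_sub_distrib]
  simp only [sum_range_cast_sub_add_one]
  -- Summation by parts against the weights `(a + b + 1) / 2 - i`, which decrease in `i`.
  have key := sum_mul_nonneg_of_antitone (N := N) (d := fun i => (ρ.rowLen i : ℝ) - ν.rowLen i)
    (c := fun i => ((ρ.rowLen i : ℝ) + ν.rowLen i + 1) / 2 - i)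
    (fun k => by
      rw [sum_sub_distrib, sub_nonneg]
      exact_mod_cast hdom k)
    (by
      rw [sum_sub_distrib, sub_eq_zero]
      exact_mod_cast ((ρ.card_eq_sum_rowLen hρ).symm.trans
        (hcard.symm.trans (ν.card_eq_sum_rowLen hν))))
    (fun i j hij => by
      have hρij : (ρ.rowLen j : ℝ) ≤ ρ.rowLen i := by exact_mod_cast ρ.rowLen_anti i j hij
      have hνij : (ν.rowLen j : ℝ) ≤ ν.rowLen i := by exact_mod_cast ν.rowLen_anti i j hij
      have hij' : (i : ℝ) ≤ j := by exact_mod_cast hij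
      dsimp only
      linarith)
  exact key.trans_eq (sum_congr rfl fun i _ => by ring)

end YoungDiagram

section Rank

variable {α β : Type*} [LinearOrder β] (s : Finset α) (e : α → β)

theorem card_filter_le_lt_of_lt {a b : α} (hb : b ∈ s) (hab : e a < e b) :
    #{x ∈ s | e x ≤ e a} < #{x ∈ s | e x ≤ e b} :=
  card_lt_card <| (ssubset_iff_of_subset (monotone_filter_right s fun _ _ hx => hx.trans hab.le)).2
    ⟨b, mem_filter.2 ⟨hb, le_rfl⟩, fun h => (mem_filter.1 h).2.not_gt hab⟩

theorem bijOn_card_filter_le (he : Function.Injective e) :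
    Set.BijOn (fun a => #{x ∈ s | e x ≤ e a}) s (Icc 1 #s) := by
  have hmaps : Set.MapsTo (fun a => #{x ∈ s | e x ≤ e a}) s (Icc 1 #s) := fun a ha =>
    mem_Icc.2 ⟨card_pos.2 ⟨a, mem_filter.2 ⟨ha, le_rfl⟩⟩, card_filter_le _ _⟩
  have hinj : Set.InjOn (fun a => #{x ∈ s | e x ≤ e a}) s := fun a ha b hb hab => by
    rcases lt_trichotomy (e a) (e b) with h | h | h
    · exact absurd hab (card_filter_le_lt_of_lt s e hb h).ne
    · exact he h
    · exact absurd hab (card_filter_le_lt_of_lt s e ha h).ne'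
  exact ⟨hmaps, hinj, surjOn_of_injOn_of_card_le _ hmaps hinj (by simp)⟩

end Rank

section Tableaux

variable {μ : YoungDiagram} {T : ℕ × ℕ → ℕ}

theorem IsYT.sum_comp {M : Type*} [AddCommMonoid M] (hT : IsYT μ T) (f : ℕ → M) :
    ∑ c ∈ μ.cells, f (T c) = ∑ k ∈ Icc 1 μ.card, f k :=
  sum_nbij T (fun _ hc => hT.mapsTo hc) hT.injOn hT.surjOn fun _ _ => rfl

theorem IsYT.card_filter_le (hT : IsYT μ T) {m : ℕ} (hm : m ≤ μ.card) :
    #{c ∈ μ.cells | T c ≤ m} = m := by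
  have h : #{c ∈ μ.cells | T c ≤ m} = #(Icc 1 m) := by
    refine card_nbij T (fun c hc => ?_) (hT.injOn.mono (filter_subset _ _)) fun k hk => ?_
    · obtain ⟨hc, hcm⟩ := mem_filter.1 hc
      exact mem_Icc.2 ⟨(mem_Icc.1 (hT.mapsTo hc)).1, hcm⟩
    · obtain ⟨hk1, hkm⟩ := mem_Icc.1 hk
      obtain ⟨c, hc, rfl⟩ := hT.surjOn (mem_Icc.2 ⟨hk1, hkm.trans hm⟩)
      exact ⟨c, mem_filter.2 ⟨hc, hkm⟩, rfl⟩
  simpa using h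

theorem IsSYT.monotoneOn (hT : IsSYT μ T) : MonotoneOn T μ.cells := by
  rintro ⟨i₁, j₁⟩ h₁ ⟨i₂, j₂⟩ h₂ ⟨hi, hj⟩
  have hmid : (i₁, j₂) ∈ μ := μ.up_left_mem hi le_rfl h₂
  calc T (i₁, j₁) ≤ T (i₁, j₂) := by
        rcases hj.eq_or_lt with rfl | hj
        · rfl
        · exact (hT.2.1 _ _ _ h₁ hmid hj).le
    _ ≤ T (i₂, j₂) := by
        rcases hi.eq_or_lt with rfl | hi
        · rfl
        · exact (hT.2.2 _ _ _ hmid h₂ hi).le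

def IsSYT.sublevel (hT : IsSYT μ T) (m : ℕ) : YoungDiagram where
  cells := {c ∈ μ.cells | T c ≤ m}
  isLowerSet c d hdc hc := by
    rw [mem_coe, mem_filter] at hc ⊢
    have hd : d ∈ μ.cells := μ.isLowerSet hdc hc.1
    exact ⟨hd, (hT.monotoneOn hd hc.1 hdc).trans hc.2⟩

theorem IsSYT.transpose (hT : IsSYT μ T) : IsSYT μ.transpose (T ∘ Prod.swap) := by
  refine ⟨?_, fun i j₁ j₂ h₁ h₂ hj => hT.2.2 j₁ j₂ i (YoungDiagram.mem_transpose.1 h₁)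
    (YoungDiagram.mem_transpose.1 h₂) hj, fun i₁ i₂ j h₁ h₂ hi =>
    hT.2.1 j i₁ i₂ (YoungDiagram.mem_transpose.1 h₁) (YoungDiagram.mem_transpose.1 h₂) hi⟩
  have hswap : Set.BijOn Prod.swap (μ.transpose.cells : Set (ℕ × ℕ)) μ.cells :=
    ⟨fun c hc => YoungDiagram.mem_transpose.1 hc, Prod.swap_injective.injOn,
      fun c hc => ⟨c.swap, YoungDiagram.mem_transpose.2 hc, c.swap_swap⟩⟩
  rw [IsYT, YoungDiagram.card_transpose]
  exact hT.1.comp hswap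

end Tableaux

section ReadingTableaux

variable (μ : YoungDiagram)

theorem rowTab_eq_card_filter_toLex_le :
    rowTab μ = fun c => #{x ∈ μ.cells | toLex x ≤ toLex c} := by
  funext c
  simp only [rowTab, Prod.Lex.toLex_le_toLex]

theorem rowTab_isSYT : IsSYT μ (rowTab μ) := by
  rw [rowTab_eq_card_filter_toLex_le]
  exact ⟨bijOn_card_filter_le _ _ toLex.injective,
    fun _ _ _ _ h₂ hj =>
      card_filter_le_lt_of_lt _ _ h₂ (Prod.Lex.toLex_lt_toLex.2 (.inr ⟨rfl, hj⟩)),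
    fun _ _ _ _ h₂ hi => card_filter_le_lt_of_lt _ _ h₂ (Prod.Lex.toLex_lt_toLex.2 (.inl hi))⟩

theorem rowTab_le_rowTab {c d : ℕ × ℕ} (h : toLex c ≤ toLex d) : rowTab μ c ≤ rowTab μ d := by
  rw [rowTab_eq_card_filter_toLex_le]
  exact card_le_card (monotone_filter_right _ fun _ _ hx => hx.trans h)

/-- Both sets are initial segments of `μ` in the row-reading order, hence comparable. -/
theorem filter_rowTab_le_subset_or (m k : ℕ) :
    {c ∈ μ.cells | rowTab μ c ≤ m} ⊆ {c ∈ μ.cells | c.1 < k} ∨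
      {c ∈ μ.cells | c.1 < k} ⊆ {c ∈ μ.cells | rowTab μ c ≤ m} := by
  by_contra h
  rw [not_or, not_subset, not_subset] at h
  obtain ⟨⟨c, hcA, hcB⟩, ⟨d, hdB, hdA⟩⟩ := h
  simp only [mem_filter, not_and, not_lt, not_le] at hcA hcB hdB hdA
  have := rowTab_le_rowTab μ (Prod.Lex.toLex_le_toLex.2 (.inl (hdB.2.trans_le (hcB hcA.1))))
  have := hdA hdB.1
  omega

theorem rowTab_transpose : rowTab μ.transpose = colTab μ ∘ Prod.swap := by
  funext c
  simp only [rowTab, YoungDiagram.transpose_cells, filter_map, card_map]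
  rfl

theorem colTab_isSYT : IsSYT μ (colTab μ) := by
  have h := (rowTab_isSYT μ.transpose).transpose
  rwa [YoungDiagram.transpose_transpose, rowTab_transpose, Function.comp_assoc,
    Prod.swap_swap_eq, Function.comp_id] at h

end ReadingTableaux

section Eig

variable {μ : YoungDiagram} {T : ℕ × ℕ → ℕ}

theorem IsSYT.sum_rowLen_sublevel_le (hT : IsSYT μ T) {m : ℕ} (hm : m ≤ μ.card) (k : ℕ) :
    ∑ i ∈ range k, (hT.sublevel m).rowLen i
      ≤ ∑ i ∈ range k, ((rowTab_isSYT μ).sublevel m).rowLen i := by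
  simp only [← YoungDiagram.card_filter_fst_lt, IsSYT.sublevel]
  rcases filter_rowTab_le_subset_or μ m k with h | h
  · rw [filter_true_of_mem (p := fun c : ℕ × ℕ => c.1 < k) fun c hc => (mem_filter.1 (h hc)).2,
      (rowTab_isSYT μ).1.card_filter_le hm]
    exact (card_le_card (filter_subset _ _)).trans_eq (hT.1.card_filter_le hm)
  · refine card_le_card fun c hc => ?_
    simp only [mem_filter] at hc
    exact mem_filter.2 ⟨h (mem_filter.2 ⟨hc.1.1, hc.2⟩), hc.2⟩

theorem IsSYT.sum_filter_le_sum_filter_rowTab (hT : IsSYT μ T) {m : ℕ} (hm : m ≤ μ.card) :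
    ∑ c ∈ μ.cells with T c ≤ m, ((c.2 : ℝ) - c.1 + 1)
      ≤ ∑ c ∈ μ.cells with rowTab μ c ≤ m, ((c.2 : ℝ) - c.1 + 1) :=
  YoungDiagram.sum_cells_le_of_dominates (hT.sum_rowLen_sublevel_le hm)
    ((hT.1.card_filter_le hm).trans ((rowTab_isSYT μ).1.card_filter_le hm).symm)

theorem IsSYT.eig_le_eig_rowTab (hT : IsSYT μ T) : eig μ T ≤ eig μ (rowTab μ) :=
  mul_le_mul_of_nonneg_left
    (sum_div_le_sum_div_of_sum_filter_le _ _ (fun _ hc => hT.1.mapsTo hc)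
      (fun _ hc => (rowTab_isSYT μ).1.mapsTo hc)
      fun _ hm => hT.sum_filter_le_sum_filter_rowTab (mem_Icc.1 hm).2)
    (by positivity)

theorem eig_add_eig_transpose (μ : YoungDiagram) (T : ℕ × ℕ → ℕ) :
    eig μ T + eig μ.transpose (T ∘ Prod.swap) = (μ.card : ℝ)⁻¹ * ∑ c ∈ μ.cells, 2 / (T c : ℝ) := by
  rw [eig, eig, YoungDiagram.card_transpose, YoungDiagram.sum_cells_transpose, ← mul_add,
    ← sum_add_distrib]
  congr 1
  refine sum_congr rfl fun c _ => ?_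
  simp only [Function.comp_apply, Prod.fst_swap, Prod.snd_swap, Prod.swap_swap]
  ring

theorem IsSYT.eig_colTab_le (hT : IsSYT μ T) : eig μ (colTab μ) ≤ eig μ T := by
  have hsum := (hT.1.sum_comp fun k => 2 / (k : ℝ)).trans
    ((colTab_isSYT μ).1.sum_comp fun k => 2 / (k : ℝ)).symm
  have hT' := eig_add_eig_transpose μ T
  have hcol := eig_add_eig_transpose μ (colTab μ)
  rw [← rowTab_transpose, ← hsum] at hcol
  linarith [hT.transpose.eig_le_eig_rowTab]

end Eig

/-- For every standard Young tableau `T` of shape `λ`,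
`eig(T_λ^↓) ≤ eig(T) ≤ eig(T_λ^→)`. -/
theorem eig_between (μ : YoungDiagram) (T : ℕ × ℕ → ℕ) (hT : IsSYT μ T) :
    eig μ (colTab μ) ≤ eig μ T ∧ eig μ T ≤ eig μ (rowTab μ) :=
  ⟨hT.eig_colTab_le, hT.eig_le_eig_rowTab⟩
end

section
/- Monotonicity in the dominance order: let λ, μ ⊢ n be partitions with λ ⊵ μ. Then eig(T_λ^→) ≥ eig(T_μ^→) and eig(T_λ^↓) ≥ eig(T_μ^↓). -/
open scoped BigOperators

/-- `μ` dominates `ν` (as partitions, read off through row lengths):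
`∑_{i=1}^j ν_i ≤ ∑_{i=1}^j μ_i` for every `j`. -/
def Dominates (μ ν : YoungDiagram) : Prop :=
  ∀ j : ℕ, ∑ i ∈ Finset.range j, ν.rowLen i ≤ ∑ i ∈ Finset.range j, μ.rowLen i

/-!
Abel summation writes `∑ w(c) / T(c)` as a nonnegative combination of the partial weights
`W(t) = ∑_{T(c) ≤ t} w(c)`, so it suffices to compare these for every `t`. For the row
reading, the cells with `T(c) ≤ t` form a Young diagram with row partial sums
`min (λ₁ + ⋯ + λᵢ) t`, so dominance passes to these prefixes; the column reading is the row
reading of the transpose, and on diagrams of equal size transposition reverses dominance.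
Finally, with `w(i, j) = j - i + 1` and equal sizes, `∑ i = ∑ₖ (n - λ₁ - ⋯ - λₖ₊₁)` decreases
along dominance while `∑ j`, the same sum for the transpose, increases.
-/

open Finset YoungDiagram

theorem sum_div_eq_by_parts {ι : Type*} (s : Finset ι) (w : ι → ℝ) (f : ι → ℕ) {n : ℕ}
    (hf : ∀ i ∈ s, f i ∈ Icc 1 n) :
    ∑ i ∈ s, w i / f i = (∑ i ∈ s with f i ≤ n, w i) / n
      + ∑ t ∈ Ico 1 n, (1 / (t : ℝ) - 1 / (t + 1)) * ∑ i ∈ s with f i ≤ t, w i := by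
  have htelescope : ∀ i ∈ s, w i / f i
      = w i / n + ∑ t ∈ Ico (f i) n, (1 / (t : ℝ) - 1 / (t + 1)) * w i := fun i hi => by
    have hn := (mem_Icc.1 (hf i hi)).2
    have := sum_Ico_sub (f := fun t : ℕ => -(1 / (t : ℝ))) hn
    push_cast [neg_sub_neg] at this
    rw [← sum_mul, div_eq_mul_one_div, div_eq_mul_one_div (w i)]
    linear_combination (-w i) * this
  rw [sum_congr rfl htelescope, sum_add_distrib, ← sum_div, filter_true_of_mem fun i hi =>
    (mem_Icc.1 (hf i hi)).2]
  congr 1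
  simp_rw [mul_sum]
  refine sum_comm' fun i t => ?_
  have := hf i
  simp only [mem_Ico, mem_filter, mem_Icc] at this ⊢
  constructor
  · rintro ⟨hi, hit, htn⟩
    exact ⟨⟨hi, hit⟩, (this hi).1.trans hit, htn⟩
  · rintro ⟨⟨hi, hit⟩, -, htn⟩
    exact ⟨hi, hit, htn⟩

theorem sum_div_le_sum_div_of_sum_filter_le_s7 {ι κ : Type*} {s : Finset ι} {s' : Finset κ}
    {w : ι → ℝ} {w' : κ → ℝ} {f : ι → ℕ} {f' : κ → ℕ} {n : ℕ}
    (hf : ∀ i ∈ s, f i ∈ Icc 1 n) (hf' : ∀ i ∈ s', f' i ∈ Icc 1 n)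
    (h : ∀ t, ∑ i ∈ s with f i ≤ t, w i ≤ ∑ i ∈ s' with f' i ≤ t, w' i) :
    ∑ i ∈ s, w i / f i ≤ ∑ i ∈ s', w' i / f' i := by
  rw [sum_div_eq_by_parts s w f hf, sum_div_eq_by_parts s' w' f' hf']
  gcongr with t ht
  · exact h n
  · have ht : (1 : ℝ) ≤ t := by exact_mod_cast (mem_Ico.1 ht).1
    rw [sub_nonneg]
    gcongr
    linarith
  · exact h t

namespace YoungDiagram

variable (μ : YoungDiagram)

def rowLenSum (i : ℕ) : ℕ := ∑ r ∈ range i, μ.rowLen r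

theorem rowLenSum_zero : μ.rowLenSum 0 = 0 := sum_range_zero _

theorem rowLenSum_succ (i : ℕ) : μ.rowLenSum (i + 1) = μ.rowLenSum i + μ.rowLen i :=
  sum_range_succ _ _

theorem rowLenSum_mono : Monotone μ.rowLenSum := fun _ _ h =>
  sum_le_sum_of_subset (range_subset_range.2 h)

theorem card_filter_fst_lt_s7 (i : ℕ) : #{c ∈ μ.cells | c.1 < i} = μ.rowLenSum i := by
  rw [card_eq_sum_card_fiberwise (f := Prod.fst) (t := range i) fun c hc => by
    simpa using (mem_filter.1 hc).2]
  refine sum_congr rfl fun r hr => ?_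
  rw [rowLen_eq_card, row, filter_filter]
  congr 1
  refine filter_congr fun c _ => ?_
  exact ⟨And.right, fun h => ⟨h ▸ mem_range.1 hr, h⟩⟩

theorem fst_lt_card {c : ℕ × ℕ} (hc : c ∈ μ) : c.1 < μ.card := by
  calc c.1 < μ.colLen c.2 := mem_iff_lt_colLen.1 hc
    _ ≤ μ.colLen 0 := μ.colLen_anti 0 c.2 c.2.zero_le
    _ = #(μ.col 0) := μ.colLen_eq_card
    _ ≤ μ.card := card_le_card (filter_subset _ _)

theorem rowLenSum_of_forall_fst_lt {R : ℕ} (h : ∀ c ∈ μ, c.1 < R) :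
    μ.rowLenSum R = μ.card := by
  rw [← card_filter_fst_lt_s7, filter_true_of_mem h]

theorem sum_fst_eq :
    ∑ c ∈ μ.cells, c.1 = ∑ i ∈ range μ.card, (μ.card - μ.rowLenSum (i + 1)) := by
  have hfst : ∀ c ∈ μ.cells, c.1 = #{i ∈ range μ.card | i < c.1} := fun c hc => by
    rw [filter_congr (q := (· ∈ range c.1)) fun i hi => by simp, filter_mem_eq_inter,
      (inter_eq_right).2 (range_subset_range.2 (μ.fst_lt_card hc).le), card_range]
  have hcount (i : ℕ) : #{c ∈ μ.cells | i < c.1} = μ.card - μ.rowLenSum (i + 1) := by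
    have hsplit := card_filter_add_card_filter_not (s := μ.cells) (fun c => c.1 < i + 1)
    simp only [not_lt, Nat.add_one_le_iff, card_filter_fst_lt_s7] at hsplit
    change _ = #μ.cells - _
    omega
  rw [sum_congr rfl hfst, ← sum_congr rfl fun i _ => hcount i]
  simp_rw [card_filter]
  exact sum_comm

theorem sum_transpose {M : Type*} [AddCommMonoid M] (g : ℕ × ℕ → M) :
    ∑ c ∈ μ.transpose.cells, g c = ∑ c ∈ μ.cells, g c.swap := by
  simp [transpose, sum_map]

theorem card_transpose_s7 : μ.transpose.card = μ.card := card_map _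

theorem card_filter_transpose (p : ℕ × ℕ → Prop) [DecidablePred p] :
    #{c ∈ μ.transpose.cells | p c} = #{c ∈ μ.cells | p c.swap} := by
  rw [card_filter, card_filter, sum_transpose]

theorem rowLenSum_transpose (j : ℕ) : μ.transpose.rowLenSum j = #{c ∈ μ.cells | c.2 < j} := by
  rw [← card_filter_fst_lt_s7, card_filter_transpose]
  rfl

theorem rowLenSum_le_card_filter_le_snd_add_mul (j k : ℕ) :
    μ.rowLenSum k ≤ #{c ∈ μ.cells | j ≤ c.2} + j * k := by
  rw [← card_filter_fst_lt_s7, ← card_filter_add_card_filter_not (fun c : ℕ × ℕ => j ≤ c.2),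
    filter_filter, filter_filter]
  gcongr
  · exact And.right
  · calc #{c ∈ μ.cells | c.1 < k ∧ ¬j ≤ c.2} ≤ #(range k ×ˢ range j) :=
          card_le_card fun c hc => by
            simp only [mem_filter, mem_product, mem_range, not_le] at hc ⊢
            exact ⟨hc.2.1, hc.2.2⟩
      _ = j * k := by rw [card_product, card_range, card_range, mul_comm]

theorem card_filter_le_snd_add_mul_colLen (j : ℕ) :
    #{c ∈ μ.cells | j ≤ c.2} + j * μ.colLen j = μ.rowLenSum (μ.colLen j) := by
  rw [← card_filter_fst_lt_s7, ← card_filter_add_card_filter_not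
    (s := {c ∈ μ.cells | c.1 < μ.colLen j}) (fun c => j ≤ c.2), filter_filter, filter_filter]
  congr 1
  · congr 1
    refine filter_congr fun c hc => ⟨fun hj => ⟨?_, hj⟩, And.right⟩
    exact (mem_iff_lt_colLen.1 hc).trans_le (μ.colLen_anti j c.2 hj)
  · have hrect :
        {c ∈ μ.cells | c.1 < μ.colLen j ∧ ¬j ≤ c.2} = range (μ.colLen j) ×ˢ range j := by
      ext ⟨a, b⟩
      simp only [mem_filter, mem_product, mem_range, not_le, mem_cells]
      refine ⟨And.right, fun ⟨ha, hb⟩ => ⟨μ.up_left_mem le_rfl hb.le ?_, ha, hb⟩⟩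
      exact mem_iff_lt_colLen.2 ha
    rw [hrect, card_product, card_range, card_range, mul_comm]

end YoungDiagram

section

variable {μ ν : YoungDiagram}

theorem Dominates.sum_fst_le (h : Dominates μ ν) (hc : μ.card = ν.card) :
    ∑ c ∈ μ.cells, c.1 ≤ ∑ c ∈ ν.cells, c.1 := by
  rw [μ.sum_fst_eq, ν.sum_fst_eq, hc]
  exact sum_le_sum fun i _ => Nat.sub_le_sub_left (h (i + 1)) _

theorem Dominates.transpose (h : Dominates μ ν) (hc : μ.card = ν.card) :
    Dominates ν.transpose μ.transpose := fun j => by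
  change μ.transpose.rowLenSum j ≤ ν.transpose.rowLenSum j
  rw [rowLenSum_transpose, rowLenSum_transpose]
  -- Count the cells in columns `≥ j` instead: in `ν` they are the cells of its first
  -- `k = ν.colLen j` rows outside the `k × j` rectangle, and the first `k` rows of `μ` hold at
  -- least as many such cells.
  have hsplit (κ : YoungDiagram) :=
    card_filter_add_card_filter_not (s := κ.cells) (fun c => c.2 < j)
  simp only [not_lt] at hsplit
  have hμ := hsplit μ
  have hν := hsplit ν
  have hrow : ν.rowLenSum (ν.colLen j) ≤ μ.rowLenSum (ν.colLen j) := h _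
  have := ν.card_filter_le_snd_add_mul_colLen j
  have := μ.rowLenSum_le_card_filter_le_snd_add_mul j (ν.colLen j)
  change #μ.cells = #ν.cells at hc
  omega

theorem Dominates.sum_content_le (h : Dominates μ ν) (hc : μ.card = ν.card) :
    ∑ c ∈ ν.cells, ((c.2 : ℝ) - c.1 + 1) ≤ ∑ c ∈ μ.cells, ((c.2 : ℝ) - c.1 + 1) := by
  have hfst : ((∑ c ∈ μ.cells, c.1 : ℕ) : ℝ) ≤ ∑ c ∈ ν.cells, c.1 := by
    exact_mod_cast h.sum_fst_le hc
  have hsnd : ((∑ c ∈ ν.cells, c.2 : ℕ) : ℝ) ≤ ∑ c ∈ μ.cells, c.2 := by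
    have := (h.transpose hc).sum_fst_le (by rw [card_transpose_s7, card_transpose_s7, hc])
    rw [sum_transpose, sum_transpose] at this
    exact_mod_cast this
  simp only [sum_add_distrib, sum_sub_distrib, sum_const, nsmul_one] at hfst hsnd ⊢
  push_cast at hfst hsnd
  have hcard : (#ν.cells : ℝ) = #μ.cells := by exact_mod_cast hc.symm
  linarith

theorem rowTab_mem_Icc {c : ℕ × ℕ} (hc : c ∈ μ) : rowTab μ c ∈ Icc 1 μ.card :=
  mem_Icc.2 ⟨card_pos.2 ⟨c, mem_filter.2 ⟨hc, Or.inr ⟨rfl, le_rfl⟩⟩⟩, card_filter_le _ _⟩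

theorem rowTab_of_mem {i j : ℕ} (h : (i, j) ∈ μ) :
    rowTab μ (i, j) = μ.rowLenSum i + j + 1 := by
  rw [rowTab, ← card_filter_add_card_filter_not (fun c : ℕ × ℕ => c.1 < i), filter_filter,
    filter_filter, ← card_filter_fst_lt_s7]
  have hrow :
      {c ∈ μ.cells | (c.1 < i ∨ c.1 = i ∧ c.2 ≤ j) ∧ ¬c.1 < i} = {i} ×ˢ range (j + 1) := by
    ext ⟨a, b⟩
    simp only [mem_filter, mem_cells, mem_product, mem_singleton, mem_range]
    constructor
    · rintro ⟨-, ha | ⟨rfl, hb⟩, hna⟩ <;> omega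
    · rintro ⟨rfl, hb⟩
      exact ⟨μ.up_left_mem le_rfl (by omega) h, Or.inr ⟨rfl, by omega⟩, by omega⟩
  rw [hrow, card_product, card_singleton, card_range, one_mul, ← add_assoc]
  congr 3
  refine filter_congr fun c _ => ?_
  exact ⟨And.right, fun hc => ⟨Or.inl hc, hc⟩⟩

theorem rowTab_mono {i i' j j' : ℕ} (h : (i, j) ∈ μ) (hi : i' ≤ i) (hj : j' ≤ j) :
    rowTab μ (i', j') ≤ rowTab μ (i, j) := by
  have h' : (i', j') ∈ μ := μ.up_left_mem hi hj h
  rw [rowTab_of_mem h, rowTab_of_mem h']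
  rcases hi.eq_or_lt with rfl | hi
  · omega
  · have := μ.rowLenSum_mono (Nat.add_one_le_iff.2 hi)
    have := μ.rowLenSum_succ i'
    have := mem_iff_lt_rowLen.1 h'
    omega

namespace YoungDiagram

def rowPrefix (μ : YoungDiagram) (t : ℕ) : YoungDiagram where
  cells := {c ∈ μ.cells | rowTab μ c ≤ t}
  isLowerSet := by
    rintro ⟨i, j⟩ ⟨i', j'⟩ hle hc
    simp only [coe_filter, Set.mem_ofPred_eq, mem_cells] at hc ⊢
    exact ⟨μ.up_left_mem hle.1 hle.2 hc.1, (rowTab_mono hc.1 hle.1 hle.2).trans hc.2⟩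

theorem mem_rowPrefix {t : ℕ} {c : ℕ × ℕ} : c ∈ μ.rowPrefix t ↔ c ∈ μ ∧ rowTab μ c ≤ t :=
  mem_filter

theorem rowLen_rowPrefix (t i : ℕ) :
    (μ.rowPrefix t).rowLen i = min (μ.rowLenSum (i + 1)) t - min (μ.rowLenSum i) t := by
  refine eq_of_forall_lt_iff fun j => ?_
  rw [← mem_iff_lt_rowLen, mem_rowPrefix, μ.rowLenSum_succ]
  by_cases h : (i, j) ∈ μ
  · rw [rowTab_of_mem h, and_iff_right h]
    have := mem_iff_lt_rowLen.1 h
    omega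
  · have := mem_iff_lt_rowLen.not.1 h
    simp only [h, false_and, false_iff]
    omega

theorem rowLenSum_rowPrefix (t i : ℕ) :
    (μ.rowPrefix t).rowLenSum i = min (μ.rowLenSum i) t := by
  change ∑ r ∈ range i, (μ.rowPrefix t).rowLen r = _
  simp_rw [rowLen_rowPrefix]
  rw [sum_range_tsub fun _ _ h => min_le_min_right t (μ.rowLenSum_mono h), rowLenSum_zero,
    Nat.zero_min, tsub_zero]

theorem card_rowPrefix (t : ℕ) : (μ.rowPrefix t).card = min μ.card t := by
  rw [← (μ.rowPrefix t).rowLenSum_of_forall_fst_lt fun c hc =>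
      μ.fst_lt_card (mem_rowPrefix.1 hc).1, rowLenSum_rowPrefix,
    μ.rowLenSum_of_forall_fst_lt fun c => μ.fst_lt_card]

def colPrefix (μ : YoungDiagram) (t : ℕ) : YoungDiagram := (μ.transpose.rowPrefix t).transpose

theorem colTab_eq_rowTab_transpose (c : ℕ × ℕ) : colTab μ c = rowTab μ.transpose c.swap := by
  rw [rowTab, card_filter_transpose]
  rfl

theorem colTab_mem_Icc {c : ℕ × ℕ} (hc : c ∈ μ) : colTab μ c ∈ Icc 1 μ.card := by
  rw [colTab_eq_rowTab_transpose, ← card_transpose_s7]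
  exact rowTab_mem_Icc (mem_transpose.2 hc)

theorem cells_colPrefix (t : ℕ) :
    (μ.colPrefix t).cells = {c ∈ μ.cells | colTab μ c ≤ t} := by
  ext c
  simp [colPrefix, mem_rowPrefix, colTab_eq_rowTab_transpose]

theorem card_colPrefix (t : ℕ) : (μ.colPrefix t).card = min μ.card t := by
  rw [colPrefix, card_transpose_s7, card_rowPrefix, card_transpose_s7]

end YoungDiagram

theorem Dominates.rowPrefix (h : Dominates μ ν) (t : ℕ) :
    Dominates (μ.rowPrefix t) (ν.rowPrefix t) := fun j => by
  change (ν.rowPrefix t).rowLenSum j ≤ (μ.rowPrefix t).rowLenSum j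
  rw [rowLenSum_rowPrefix, rowLenSum_rowPrefix]
  exact min_le_min_right t (h j)

theorem Dominates.colPrefix (h : Dominates μ ν) (hc : μ.card = ν.card) (t : ℕ) :
    Dominates (μ.colPrefix t) (ν.colPrefix t) :=
  ((h.transpose hc).rowPrefix t).transpose (by rw [card_rowPrefix, card_rowPrefix,
    card_transpose_s7, card_transpose_s7, hc])

end

/-- Monotonicity in the dominance order: if `λ, μ ⊢ n` and `λ ⊵ μ` then
`eig(T_λ^→) ≥ eig(T_μ^→)` and `eig(T_λ^↓) ≥ eig(T_μ^↓)`. -/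
theorem eig_dominance (n : ℕ) (μ ν : YoungDiagram) (hμ : μ.card = n) (hν : ν.card = n)
    (hdom : Dominates μ ν) :
    eig ν (rowTab ν) ≤ eig μ (rowTab μ) ∧ eig ν (colTab ν) ≤ eig μ (colTab μ) := by
  have hc : μ.card = ν.card := hμ.trans hν.symm
  unfold eig
  rw [hμ, hν]
  refine ⟨mul_le_mul_of_nonneg_left ?_ (by positivity),
    mul_le_mul_of_nonneg_left ?_ (by positivity)⟩
  · refine sum_div_le_sum_div_of_sum_filter_le_s7 (n := n) (fun c hc => hν ▸ rowTab_mem_Icc hc)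
      (fun c hc => hμ ▸ rowTab_mem_Icc hc) fun t => ?_
    exact (hdom.rowPrefix t).sum_content_le (by rw [card_rowPrefix, card_rowPrefix, hc])
  · refine sum_div_le_sum_div_of_sum_filter_le_s7 (n := n) (fun c hc => hν ▸ colTab_mem_Icc hc)
      (fun c hc => hμ ▸ colTab_mem_Icc hc) fun t => ?_
    rw [← cells_colPrefix, ← cells_colPrefix]
    exact (hdom.colPrefix hc t).sum_content_le (by rw [card_colPrefix, card_colPrefix, hc])
end

section
/- Eigenvalue bounds for biased shuffles with α ≤ 1: let α ≤ 1, n ≥ 1, and let λ ⊢ n be a partition with first part λ₁ = n − k. If k ≤ n/4 then eig_α(T_λ^→) ≤ 1 − (n−k+1)·k·n^α/(n·N_α(n)); if k > n/4 then eig_α(T_λ^→) ≤ 1 − k·n^α/(2·N_α(n)). -/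
/-!
Write `T = T_λ^→` and `c = (i, j)`. As `T` enumerates `1, …, n`, `N_α(n) = ∑_c T(c) · T(c)^(α-1)`,
so `N_α(n) · (1 - eig_α(T)) = ∑_c (T(c) - (j - i + 1)) · T(c)^(α-1)`, and
`T(c) - (j - i + 1) = i + #(cells in the rows above row i) ≥ 0`. For `α ≤ 1` every
`T(c)^(α-1) ≥ n^(α-1)`, so `1 - eig_α(T)` is at least `n^(α-1) / N_α(n)` times the excess
`∑_c (T(c) - (j - i + 1))`. The excess is at least `k (n - k + 1)`, since each of the `k` cells
below the first row contributes at least `λ₁ + 1`, and at least `n k / 2`, by counting pairs of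
cells in different rows.
-/

open scoped BigOperators

/-- `N_α(n) = ∑_{j=1}^n j^α`. -/
noncomputable def Nalpha (α : ℝ) (n : ℕ) : ℝ := ∑ j ∈ Finset.Icc 1 n, (j : ℝ) ^ α

/-- The biased eigenvalue statistic of a tableau-filling `T` of the Young diagram `μ`:
`eig_α(T) = (1/N_α(n)) ∑_{(i,j)∈μ} (j-i+1)·T(i,j)^{α−1}` (cells are 0-indexed, which
leaves `j-i+1` unchanged). -/
noncomputable def eigb (α : ℝ) (μ : YoungDiagram) (T : ℕ × ℕ → ℕ) : ℝ :=
  (Nalpha α μ.card)⁻¹ *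
    ∑ c ∈ μ.cells, (((c.2 : ℝ) - (c.1 : ℝ) + 1) * ((T c : ℝ) ^ (α - 1)))
open Finset

namespace Finset

variable {ι α : Type*} [LinearOrder α] {f : ι → α} {s : Finset ι}

theorem card_filter_le_lt_card_filter_le {a b : ι} (hb : b ∈ s) (hab : f a < f b) :
    #{x ∈ s | f x ≤ f a} < #{x ∈ s | f x ≤ f b} := by
  refine card_lt_card ((ssubset_iff_of_subset ?_).2 ⟨b, ?_, ?_⟩)
  · exact fun x hx => mem_filter.2 ⟨(mem_filter.1 hx).1, (mem_filter.1 hx).2.trans hab.le⟩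
  · simp [hb]
  · simp [hab]

theorem card_filter_le_mem_Icc {a : ι} (ha : a ∈ s) : #{x ∈ s | f x ≤ f a} ∈ Icc 1 #s :=
  mem_Icc.2 ⟨card_pos.2 ⟨a, by simp [ha]⟩, card_filter_le _ _⟩

theorem injOn_card_filter_le (hf : Set.InjOn f s) :
    Set.InjOn (fun a => #{x ∈ s | f x ≤ f a}) s := by
  intro a ha b hb hab
  by_contra hne
  rcases lt_or_gt_of_ne (hf.ne ha hb hne) with h | h
  · exact (card_filter_le_lt_card_filter_le hb h).ne hab
  · exact (card_filter_le_lt_card_filter_le ha h).ne' hab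

theorem image_card_filter_le (hf : Set.InjOn f s) :
    s.image (fun a => #{x ∈ s | f x ≤ f a}) = Icc 1 #s := by
  refine eq_of_subset_of_card_le (image_subset_iff.2 fun a ha => card_filter_le_mem_Icc ha) ?_
  rw [card_image_of_injOn (injOn_card_filter_le hf), Nat.card_Icc, Nat.add_sub_cancel]

end Finset

theorem Nalpha_pos (α : ℝ) {n : ℕ} (hn : 1 ≤ n) : 0 < Nalpha α n :=
  sum_pos (fun j hj => Real.rpow_pos_of_pos (by exact_mod_cast (mem_Icc.1 hj).1) α)
    ⟨1, mem_Icc.2 ⟨le_rfl, hn⟩⟩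

namespace YoungDiagram

variable (μ : YoungDiagram)

def cardAbove (i : ℕ) : ℕ := #{c ∈ μ.cells | c.1 < i}

/-- `∑_c (T(c) - (j - i + 1))` over the cells `c = (i, j)`, for `T = rowTab μ`
(see `rowTab_eq_cardAbove_add`). -/
def rowTabExcess : ℕ := ∑ c ∈ μ.cells, (μ.cardAbove c.1 + c.1)

theorem rowTab_eq_card_filter_toLex_le (c : ℕ × ℕ) :
    rowTab μ c = #{c' ∈ μ.cells | toLex c' ≤ toLex c} := by
  simp only [rowTab, Prod.Lex.toLex_le_toLex]

theorem rowTab_mem_Icc {c : ℕ × ℕ} (hc : c ∈ μ.cells) : rowTab μ c ∈ Icc 1 μ.card := by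
  rw [rowTab_eq_card_filter_toLex_le]
  exact card_filter_le_mem_Icc hc

theorem sum_rowTab {M : Type*} [AddCommMonoid M] (g : ℕ → M) :
    ∑ c ∈ μ.cells, g (rowTab μ c) = ∑ j ∈ Icc 1 μ.card, g j := by
  have hinj : Set.InjOn toLex (μ.cells : Set (ℕ × ℕ)) := toLex.injective.injOn
  rw [funext μ.rowTab_eq_card_filter_toLex_le, ← image_card_filter_le hinj,
    sum_image (injOn_card_filter_le hinj)]

theorem rowTab_eq_cardAbove_add {c : ℕ × ℕ} (hc : c ∈ μ.cells) :
    rowTab μ c = μ.cardAbove c.1 + (c.2 + 1) := by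
  have hrow : {c' ∈ μ.cells | c'.1 = c.1 ∧ c'.2 ≤ c.2} = {c.1} ×ˢ range (c.2 + 1) := by
    ext ⟨i, j⟩
    simp only [mem_filter, mem_cells, mem_product, mem_singleton, mem_range, Nat.lt_succ_iff]
    exact ⟨fun h => h.2, fun h => ⟨μ.up_left_mem h.1.le h.2 hc, h⟩⟩
  rw [rowTab, filter_or, card_union_of_disjoint, hrow, card_product, card_singleton,
    card_range, one_mul, cardAbove]
  exact disjoint_filter.2 fun c' _ h h' => h.ne h'.1

theorem rowLen_zero_le_cardAbove {i : ℕ} (hi : 1 ≤ i) : μ.rowLen 0 ≤ μ.cardAbove i := by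
  rw [rowLen_eq_card]
  refine card_le_card fun c hc => ?_
  rw [mem_row_iff] at hc
  exact mem_filter.2 ⟨hc.1, by omega⟩

theorem card_filter_ne_row {i : ℕ} : #{c ∈ μ.cells | c.1 ≠ i} + μ.rowLen i = μ.card := by
  rw [rowLen_eq_card, row, add_comm, card_filter_add_card_filter_not (fun c : ℕ × ℕ => c.1 = i)]

/-- Counting pairs of cells in different rows twice: each cell `c` has at least `k` cells
outside its row, and such a pair is counted once from the upper and once from the lower cell. -/
theorem card_mul_le_two_mul_rowTabExcess {k : ℕ} (hk : μ.rowLen 0 + k = μ.card) :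
    μ.card * k ≤ 2 * μ.rowTabExcess := by
  have hswap : ∑ c ∈ μ.cells, μ.cardAbove c.1 = ∑ c ∈ μ.cells, #{c' ∈ μ.cells | c.1 < c'.1} := by
    simp only [cardAbove, card_filter]
    exact sum_comm
  have hrow : ∀ c ∈ μ.cells, k ≤ μ.cardAbove c.1 + #{c' ∈ μ.cells | c.1 < c'.1} := by
    intro c _
    have hsplit : {c' ∈ μ.cells | c'.1 ≠ c.1} =
        {c' ∈ μ.cells | c'.1 < c.1} ∪ {c' ∈ μ.cells | c.1 < c'.1} := by
      rw [← filter_or]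
      exact filter_congr fun c' _ => ne_iff_lt_or_gt
    have hdisj : Disjoint {c' ∈ μ.cells | c'.1 < c.1} {c' ∈ μ.cells | c.1 < c'.1} :=
      disjoint_filter.2 fun c' _ h h' => h.asymm h'
    have hcard := μ.card_filter_ne_row (i := c.1)
    rw [hsplit, card_union_of_disjoint hdisj] at hcard
    have := μ.rowLen_anti 0 c.1 c.1.zero_le
    rw [cardAbove]
    omega
  calc μ.card * k = ∑ _c ∈ μ.cells, k := by rw [sum_const, smul_eq_mul]
    _ ≤ ∑ c ∈ μ.cells, (μ.cardAbove c.1 + #{c' ∈ μ.cells | c.1 < c'.1}) := sum_le_sum hrow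
    _ = 2 * ∑ c ∈ μ.cells, μ.cardAbove c.1 := by rw [sum_add_distrib, ← hswap, two_mul]
    _ ≤ 2 * μ.rowTabExcess := Nat.mul_le_mul_left 2 (sum_le_sum fun c _ => Nat.le_add_right _ _)

theorem mul_rowLen_zero_add_one_le_rowTabExcess {k : ℕ} (hk : μ.rowLen 0 + k = μ.card) :
    k * (μ.rowLen 0 + 1) ≤ μ.rowTabExcess := by
  have hcard : #{c ∈ μ.cells | c.1 ≠ 0} = k := by
    have := μ.card_filter_ne_row (i := 0)
    omega
  calc k * (μ.rowLen 0 + 1) = ∑ _c ∈ μ.cells with _c.1 ≠ 0, (μ.rowLen 0 + 1) := by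
        rw [sum_const, smul_eq_mul, hcard]
    _ ≤ ∑ c ∈ μ.cells with c.1 ≠ 0, (μ.cardAbove c.1 + c.1) := by
        refine sum_le_sum fun c hc => ?_
        have hi : 1 ≤ c.1 := Nat.one_le_iff_ne_zero.2 (mem_filter.1 hc).2
        exact Nat.add_le_add (μ.rowLen_zero_le_cardAbove hi) hi
    _ ≤ μ.rowTabExcess := sum_le_sum_of_subset (filter_subset _ _)

theorem one_sub_eigb_rowTab (α : ℝ) (hμ : 1 ≤ μ.card) :
    1 - eigb α μ (rowTab μ) = (∑ c ∈ μ.cells,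
      ((μ.cardAbove c.1 + c.1 : ℕ) : ℝ) * (rowTab μ c : ℝ) ^ (α - 1)) / Nalpha α μ.card := by
  have hN := Nalpha_pos α hμ
  have hsplit : Nalpha α μ.card = ∑ c ∈ μ.cells, ((c.2 : ℝ) - c.1 + 1) * (rowTab μ c : ℝ) ^ (α - 1)
      + ∑ c ∈ μ.cells, ((μ.cardAbove c.1 + c.1 : ℕ) : ℝ) * (rowTab μ c : ℝ) ^ (α - 1) := by
    rw [Nalpha, ← μ.sum_rowTab, ← sum_add_distrib]
    refine sum_congr rfl fun c hc => ?_
    have hT : (rowTab μ c : ℝ) ≠ 0 := by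
      have := (mem_Icc.1 (μ.rowTab_mem_Icc hc)).1
      positivity
    rw [← add_mul, Real.rpow_sub_one hT, μ.rowTab_eq_cardAbove_add hc]
    push_cast
    field_simp
    ring
  rw [eigb, eq_div_iff hN.ne', sub_mul, one_mul, mul_comm, ← mul_assoc, mul_inv_cancel₀ hN.ne',
    one_mul, hsplit]
  ring

theorem rowTabExcess_mul_rpow_div_le {α : ℝ} (hα : α ≤ 1) (hμ : 1 ≤ μ.card) :
    (μ.rowTabExcess : ℝ) * (μ.card : ℝ) ^ α / (μ.card * Nalpha α μ.card) ≤
      1 - eigb α μ (rowTab μ) := by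
  have hn : (0 : ℝ) < μ.card := by exact_mod_cast hμ
  rw [μ.one_sub_eigb_rowTab α hμ, show (μ.rowTabExcess : ℝ) * (μ.card : ℝ) ^ α /
      (μ.card * Nalpha α μ.card) = μ.rowTabExcess * (μ.card : ℝ) ^ (α - 1) / Nalpha α μ.card by
    rw [Real.rpow_sub_one hn.ne']; ring]
  refine div_le_div_of_nonneg_right ?_ (Nalpha_pos α hμ).le
  rw [rowTabExcess, Nat.cast_sum, sum_mul]
  refine sum_le_sum fun c hc => mul_le_mul_of_nonneg_left ?_ (Nat.cast_nonneg _)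
  have hT := mem_Icc.1 (μ.rowTab_mem_Icc hc)
  exact Real.rpow_le_rpow_of_nonpos (by exact_mod_cast hT.1) (by exact_mod_cast hT.2)
    (by linarith)

end YoungDiagram

/-- Eigenvalue bounds for biased shuffles with `α ≤ 1`: if `λ ⊢ n` (`n ≥ 1`) has first
part `λ₁ = n − k`, then `eig_α(T_λ^→) ≤ 1 − (n−k+1)·k·n^α/(n·N_α(n))` when `k ≤ n/4`,
and `eig_α(T_λ^→) ≤ 1 − k·n^α/(2·N_α(n))` when `k > n/4`. -/
theorem eigb_rowTab_bound_small_alpha (α : ℝ) (hα : α ≤ 1) (n : ℕ) (hn : 1 ≤ n)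
    (μ : YoungDiagram) (hcard : μ.card = n) (k : ℕ) (hk : μ.rowLen 0 + k = n) :
    ((k : ℝ) ≤ (n : ℝ) / 4 →
        eigb α μ (rowTab μ) ≤
          1 - (((n : ℝ) - (k : ℝ) + 1) * (k : ℝ) * (n : ℝ) ^ α) / ((n : ℝ) * Nalpha α n)) ∧
      ((n : ℝ) / 4 < (k : ℝ) →
        eigb α μ (rowTab μ) ≤ 1 - ((k : ℝ) * (n : ℝ) ^ α) / (2 * Nalpha α n)) := by
  subst hcard
  have hN := Nalpha_pos α hn
  have hn0 : (0 : ℝ) < μ.card := by exact_mod_cast hn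
  have bound (x : ℝ) (hx : x ≤ μ.rowTabExcess) :
      eigb α μ (rowTab μ) ≤ 1 - x * (μ.card : ℝ) ^ α / (μ.card * Nalpha α μ.card) := by
    have : x * (μ.card : ℝ) ^ α / (μ.card * Nalpha α μ.card) ≤
        μ.rowTabExcess * (μ.card : ℝ) ^ α / (μ.card * Nalpha α μ.card) := by
      gcongr
    linarith [μ.rowTabExcess_mul_rpow_div_le hα hn]
  refine ⟨fun _ => bound _ ?_, fun _ => ?_⟩
  · have hrow : (μ.rowLen 0 : ℝ) = μ.card - k := by
      rw [← hk, Nat.cast_add]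
      ring
    rw [← hrow, mul_comm]
    exact_mod_cast μ.mul_rowLen_zero_add_one_le_rowTabExcess hk
  · rw [show (k : ℝ) * (μ.card : ℝ) ^ α / (2 * Nalpha α μ.card) =
        μ.card * k / 2 * (μ.card : ℝ) ^ α / (μ.card * Nalpha α μ.card) by field_simp]
    refine bound _ ?_
    have : ((μ.card * k : ℕ) : ℝ) ≤ ((2 * μ.rowTabExcess : ℕ) : ℝ) :=
      Nat.cast_le.2 (μ.card_mul_le_two_mul_rowTabExcess hk)
    push_cast at this
    linarith
end

section
/- Box-index bound for the diagonal tableau: let n ∈ ℕ and 1 ≤ k ≤ n−2, and let λ = (n−k,⋆). Then every cell (i,j) of λ satisfies j − i + 1 ≤ ((n−k)/n)·T_λ^↘(i,j). -/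
open scoped BigOperators

/-!
Let `m = n - k` and `d = j - i ≥ 0`. A cell in one of the first `d + 1` columns has diagonal
index at most `d`, with equality only in row `0 ≤ i`, so it precedes `(i, j)` in the diagonal
reading; hence `T(i, j)` is at least the number of cells in the first `d + 1` columns. Column
lengths of a Young diagram are non-increasing and `(n - k, ⋆)` has its `n` cells in `m` columns,
so its first `d + 1 ≤ m` columns hold at least `(d + 1) n / m` cells. When `d < 0` the left side
is not positive.
-/

/-- The partition `(n−k,⋆)` of `n` (for `n−k ≥ 1`): `⌊n/(n−k)⌋` rows of size `n−k`,
followed (when `n−k` does not divide `n`) by a final row of size `n mod (n−k)`.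
Cell `(i,j)` (0-indexed) belongs to the diagram iff `j < n−k` and `i(n−k)+j < n`. -/
def nkStar (n k : ℕ) : YoungDiagram where
  cells := (Finset.range n ×ˢ Finset.range n).filter
      (fun c => c.2 < n - k ∧ c.1 * (n - k) + c.2 < n)
  isLowerSet := by
    rintro ⟨i₁, j₁⟩ ⟨i₂, j₂⟩ ⟨h1, h2⟩ hmem
    simp only [Finset.mem_coe, Finset.mem_filter, Finset.mem_product, Finset.mem_range]
      at hmem ⊢
    obtain ⟨⟨hi, hj⟩, hjk, hsum⟩ := hmem
    refine ⟨⟨lt_of_le_of_lt h1 hi, lt_of_le_of_lt h2 hj⟩, lt_of_le_of_lt h2 hjk, ?_⟩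
    exact lt_of_le_of_lt (Nat.add_le_add (Nat.mul_le_mul h1 (le_refl (n - k))) h2) hsum

/-- The diagonal-reading tableau `T_λ^↘`: entries `1,…,n` filled in increasing order of
the diagonal index `j−i`, each diagonal filled from top to bottom.  Explicitly,
`T_λ^↘(i,j) = #{(i',j')∈λ : j'−i' < j−i} + #{(i',j')∈λ : j'−i' = j−i ∧ i' ≤ i}`. -/
def diagTab (μ : YoungDiagram) : ℕ × ℕ → ℕ := fun c =>
  (μ.cells.filter (fun c' =>
      ((c'.2 : ℤ) - (c'.1 : ℤ) < (c.2 : ℤ) - (c.1 : ℤ)) ∨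
        ((c'.2 : ℤ) - (c'.1 : ℤ) = (c.2 : ℤ) - (c.1 : ℤ) ∧ c'.1 ≤ c.1))).card

open Finset

theorem Antitone.mul_sum_range_le_mul_sum_range {R : Type*} [CommSemiring R] [PartialOrder R]
    [IsOrderedRing R] {f : ℕ → R} (hf : Antitone f) {e m : ℕ} (hem : e ≤ m) :
    e * ∑ b ∈ range m, f b ≤ m * ∑ b ∈ range e, f b := by
  induction m, hem using Nat.le_induction with
  | base => rfl
  | succ m hem ih =>
    have hfm : e * f m ≤ ∑ b ∈ range e, f b := by
      simpa using card_nsmul_le_sum (range e) f (f m) fun b hb =>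
        hf (by simp only [mem_range] at hb; omega)
    calc (e : R) * ∑ b ∈ range (m + 1), f b = e * ∑ b ∈ range m, f b + e * f m := by
          rw [sum_range_succ, mul_add]
      _ ≤ m * ∑ b ∈ range e, f b + ∑ b ∈ range e, f b := add_le_add ih hfm
      _ = ((m + 1 : ℕ) : R) * ∑ b ∈ range e, f b := by push_cast; ring

namespace YoungDiagram

theorem card_filter_snd_lt (μ : YoungDiagram) (e : ℕ) :
    #(μ.cells.filter (·.2 < e)) = ∑ b ∈ range e, μ.colLen b := by
  rw [card_eq_sum_card_fiberwise (f := Prod.snd) (t := range e)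
    fun c hc => by simpa using (mem_filter.1 hc).2]
  refine sum_congr rfl fun b hb => ?_
  rw [colLen_eq_card, col, filter_filter]
  congr 1
  exact filter_congr fun c _ => by simp only [mem_range] at hb; omega

theorem mul_card_le_mul_card_filter_snd_lt (μ : YoungDiagram) {e m : ℕ}
    (hμ : ∀ c ∈ μ, c.2 < m) (hem : e ≤ m) :
    e * #μ.cells ≤ m * #(μ.cells.filter (·.2 < e)) := by
  conv_lhs => rw [← filter_true_of_mem hμ]
  rw [card_filter_snd_lt, card_filter_snd_lt]
  exact Antitone.mul_sum_range_le_mul_sum_range (fun _ _ h => μ.colLen_anti _ _ h) hem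

end YoungDiagram

theorem card_filter_snd_lt_le_diagTab (μ : YoungDiagram) {i j : ℕ} (hij : i ≤ j) :
    #(μ.cells.filter (·.2 < j - i + 1)) ≤ diagTab μ (i, j) :=
  card_le_card <| monotone_filter_right _ fun c _ (hc : c.2 < j - i + 1) => by dsimp only; omega

theorem mem_nkStar {n k : ℕ} {c : ℕ × ℕ} :
    c ∈ nkStar n k ↔ c.2 < n - k ∧ c.1 * (n - k) + c.2 < n := by
  rw [← YoungDiagram.mem_cells]
  simp only [nkStar, mem_filter, mem_product, mem_range]
  refine ⟨fun h => h.2, fun h => ⟨⟨?_, by omega⟩, h⟩⟩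
  have := Nat.le_mul_of_pos_right c.1 (by omega : 0 < n - k)
  omega

theorem card_nkStar {n k : ℕ} (hk : k < n) : #(nkStar n k).cells = n := by
  have hm : 0 < n - k := by omega
  conv_rhs => rw [← card_range n]
  refine card_nbij' (fun c => c.1 * (n - k) + c.2) (fun x => (x / (n - k), x % (n - k)))
    ?_ ?_ ?_ ?_
  · intro c hc
    simpa using (mem_nkStar.1 hc).2
  · intro x hx
    have := Nat.div_add_mod' x (n - k)
    have := Nat.mod_lt x hm
    simp only [coe_range, Set.mem_Iio] at hx
    simp only [mem_coe, YoungDiagram.mem_cells, mem_nkStar]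
    omega
  · rintro ⟨a, b⟩ hc
    have hb := (mem_nkStar.1 hc).1
    dsimp only at hb ⊢
    rw [Nat.add_comm, Nat.add_mul_div_right _ _ hm, Nat.div_eq_of_lt hb, Nat.add_mul_mod_self_right,
      Nat.mod_eq_of_lt hb]
    simp
  · intro x _
    exact Nat.div_add_mod' x (n - k)

theorem sub_add_one_mul_le_mul_diagTab_nkStar {n k i j : ℕ} (hc : (i, j) ∈ nkStar n k)
    (hij : i ≤ j) : (j - i + 1) * n ≤ (n - k) * diagTab (nkStar n k) (i, j) := by
  have hj : j < n - k := (mem_nkStar.1 hc).1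
  calc (j - i + 1) * n = (j - i + 1) * #(nkStar n k).cells := by rw [card_nkStar (by omega)]
    _ ≤ (n - k) * #((nkStar n k).cells.filter (·.2 < j - i + 1)) :=
        (nkStar n k).mul_card_le_mul_card_filter_snd_lt (fun _ hc' => (mem_nkStar.1 hc').1)
          (by omega)
    _ ≤ (n - k) * diagTab (nkStar n k) (i, j) :=
        Nat.mul_le_mul_left _ (card_filter_snd_lt_le_diagTab _ hij)

theorem diagTab_box_bound_general (n k : ℕ)
    (c : ℕ × ℕ) (hc : c ∈ nkStar n k) :
    ((c.2 : ℝ) - (c.1 : ℝ) + 1) ≤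
      (((n : ℝ) - (k : ℝ)) / (n : ℝ)) * ((diagTab (nkStar n k) c : ℕ) : ℝ) := by
  obtain ⟨i, j⟩ := c
  have hkn : k < n := by have := (mem_nkStar.1 hc).1; omega
  have hn : (0 : ℝ) < n := Nat.cast_pos.2 (by omega)
  rw [div_mul_eq_mul_div, le_div_iff₀ hn, ← Nat.cast_sub hkn.le]
  rcases le_or_gt i j with hij | hji
  · have key := Nat.cast_le (α := ℝ) |>.2 (sub_add_one_mul_le_mul_diagTab_nkStar hc hij)
    push_cast [Nat.cast_sub hij] at key
    exact key
  · have hd : (j : ℝ) - i + 1 ≤ 0 := by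
      have : (j : ℝ) + 1 ≤ i := by exact_mod_cast hji
      linarith
    calc ((j : ℝ) - i + 1) * n ≤ 0 := mul_nonpos_of_nonpos_of_nonneg hd hn.le
      _ ≤ _ := by positivity

/-- Box-index bound for the diagonal tableau: for `1 ≤ k ≤ n−2` and `λ = (n−k,⋆)`,
every cell `(i,j)` of `λ` satisfies `j − i + 1 ≤ ((n−k)/n)·T_λ^↘(i,j)`. -/
theorem diagTab_box_bound (n k : ℕ) (hk1 : 1 ≤ k) (hk2 : k ≤ n - 2)
    (c : ℕ × ℕ) (hc : c ∈ nkStar n k) :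
    ((c.2 : ℝ) - (c.1 : ℝ) + 1) ≤
      (((n : ℝ) - (k : ℝ)) / (n : ℝ)) * ((diagTab (nkStar n k) c : ℕ) : ℝ) :=
  diagTab_box_bound_general n k c hc
end

section
/- Separation-distance upper bound for biased one-sided transposition shuffles with α ≤ 0: for every real α ≤ 0, every n ≥ 1, every real c > 0, and every natural number t with t ≥ (N_α(n)/n^α)·(log n + c), we have sep(OST_{n,α}^t) = max_{σ∈S_n} (1 − n!·OST_{n,α}^t(σ)) ≤ e^{−c}. -/
open scoped BigOperators


/-- The biased one-sided transposition shuffle on `S_n` with weight `w(j) = j^α`: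
`OSTb n α σ = j^{α−1}/N_α(n)` if `σ = (i j)` with `1 ≤ i < j ≤ n` (positions are the
elements of `Fin n`, so position `j` carries weight `(j+1)^{α−1}/N_α(n)`),
`OSTb n α 1 = (∑_{j=1}^n j^{α−1})/N_α(n)`, and `0` otherwise. -/
noncomputable def OSTb (n : ℕ) (α : ℝ) : Equiv.Perm (Fin n) → ℝ := fun σ =>
  ∑ j : Fin n, ∑ i : Fin n,
    if i ≤ j ∧ σ = Equiv.swap i j then (((j : ℕ) : ℝ) + 1) ^ (α - 1) / Nalpha α n else 0


/-- The separation distance of `P` from the uniform distribution on `S_n`: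
`sep(P) = max_{σ∈S_n} (1 − n!·P(σ))`, written as a supremum over `S_n`. -/
noncomputable def sepDist {n : ℕ} (P : Equiv.Perm (Fin n) → ℝ) : ℝ :=
  ⨆ σ : Equiv.Perm (Fin n), (1 - (Nat.factorial n : ℝ) * P σ)

/-!
Distributions on `S_n` are elements of the group algebra `ℝ[S_n]`, in which convolution is
multiplication. There `OST_{n,α} = ∑ⱼ wⱼ Rⱼ`, where `Rⱼ` transposes position `j` with a uniform
position `i ≤ j` and `wⱼ = (j+1)^α / N_α(n)` (positions are indexed from `0`). The `Rⱼ` commute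
pairwise, `R_{n-1} ⋯ R_1 R_0` is the uniform distribution `U` (a Fisher–Yates shuffle), and `U`
absorbs every `Rⱼ`. Expanding `OST_{n,α}^t`, every word using all `n` letters therefore
contributes `U`, so `n! · OST_{n,α}^t(σ)` is at least the probability that `t` independent
`w`-distributed letters cover all positions. Since `α ≤ 0` gives `wⱼ ≥ n^α / N_α(n)`, a union
bound over the missing position bounds the failure probability by
`n · exp(-t n^α / N_α(n)) ≤ e^{-c}`.
-/

open Finset Equiv MonoidAlgebra

section GroupAlgebra

variable {R G : Type*} [Semiring R]

theorem MonoidAlgebra.coeff_one_apply [Monoid G] [DecidableEq G] (g : G) :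
    (1 : MonoidAlgebra R G).coeff g = if g = 1 then 1 else 0 := by
  change (single 1 1 : MonoidAlgebra R G).coeff g = _
  simp [coeff_single, Finsupp.single_apply, eq_comm]

variable [Group G] [Fintype G]

theorem MonoidAlgebra.coeff_mul_apply_eq_sum (x y : MonoidAlgebra R G) (g : G) :
    (x * y).coeff g = ∑ h, x.coeff (g * h⁻¹) * y.coeff h := by
  rw [coeff_mul_apply_right, Finsupp.sum_fintype _ _ fun _ => mul_zero _]

theorem MonoidAlgebra.coeff_mul_nonneg [PartialOrder R] [IsOrderedRing R]
    {x y : MonoidAlgebra R G} (hx : ∀ g, 0 ≤ x.coeff g) (hy : ∀ g, 0 ≤ y.coeff g) (g : G) :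
    0 ≤ (x * y).coeff g := by
  rw [coeff_mul_apply_eq_sum]
  exact sum_nonneg fun h _ => mul_nonneg (hx _) (hy h)

end GroupAlgebra

theorem Function.Surjective.prod_comp_eq_of_absorbing {M ι κ : Type*} [CommMonoid M] [Fintype ι]
    [Fintype κ] {x : κ → M} (hx : ∀ j, (∏ k, x k) * x j = ∏ k, x k) {f : ι → κ}
    (hf : Function.Surjective f) : ∏ i, x (f i) = ∏ k, x k := by
  classical
  have hg := Function.injective_surjInv hf
  rw [← prod_mul_prod_compl (univ.image (Function.surjInv hf)), prod_image hg.injOn]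
  simp only [Function.surjInv_eq hf]
  exact prod_induction _ (fun y => (∏ k, x k) * y = ∏ k, x k)
    (fun a b ha hb => by rw [← mul_assoc, ha, hb]) (mul_one _) fun i _ => hx (f i)

theorem sum_prod_not_surjective_le {ι : Type*} [Fintype ι] [DecidableEq ι] {p : ι → ℝ}
    (hp : ∀ j, 0 ≤ p j) (hsum : ∑ j, p j = 1) (t : ℕ) :
    ∑ f : Fin t → ι with ¬ Function.Surjective f, ∏ i, p (f i) ≤ ∑ j, (1 - p j) ^ t := by
  have hW (f : Fin t → ι) : 0 ≤ ∏ i, p (f i) := prod_nonneg fun i _ => hp (f i)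
  have hmiss (j : ι) : ∑ f : Fin t → ι with ∀ i, f i ≠ j, ∏ i, p (f i) = (1 - p j) ^ t := by
    rw [← sum_erase_add univ p (mem_univ j)] at hsum
    rw [show 1 - p j = ∑ k ∈ univ.erase j, p k by linarith, sum_pow']
    congr 1
    ext f
    simp [Fintype.mem_piFinset]
  calc ∑ f : Fin t → ι with ¬ Function.Surjective f, ∏ i, p (f i)
      ≤ ∑ f : Fin t → ι with ¬ Function.Surjective f,
          ∑ j, if ∀ i, f i ≠ j then ∏ i, p (f i) else 0 := by
        refine sum_le_sum fun f hf => ?_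
        obtain ⟨j, hj⟩ := not_forall.1 (mem_filter.1 hf).2
        refine le_trans (le_of_eq ?_) (single_le_sum (fun k _ => ?_) (mem_univ j))
        · exact (if_pos fun i h => hj ⟨i, h⟩).symm
        · split_ifs
          exacts [hW f, le_rfl]
    _ ≤ ∑ f : Fin t → ι, ∑ j, if ∀ i, f i ≠ j then ∏ i, p (f i) else 0 := by
        refine sum_le_sum_of_subset_of_nonneg (filter_subset _ _) fun f _ _ =>
          sum_nonneg fun j _ => ?_
        split_ifs
        exacts [hW f, le_rfl]
    _ = ∑ j, (1 - p j) ^ t := by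
        rw [sum_comm]
        exact sum_congr rfl fun j _ => by rw [← sum_filter, hmiss]

theorem one_sub_pow_le_exp_neg_mul {p : ℝ} (hp : p ≤ 1) (t : ℕ) :
    (1 - p) ^ t ≤ Real.exp (-(t * p)) := by
  calc (1 - p) ^ t ≤ Real.exp (-p) ^ t :=
        pow_le_pow_left₀ (by linarith) (Real.one_sub_le_exp_neg p) t
    _ = Real.exp (-(t * p)) := by rw [← Real.exp_nat_mul, mul_neg]

theorem Equiv.swap_apply_le_iff {α : Type*} [LinearOrder α] {i j k l : α} (hi : i ≤ k)
    (hj : j ≤ k) : swap i j l ≤ k ↔ l ≤ k := by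
  rw [swap_apply_def]
  split_ifs with h1 h2 <;> subst_vars <;> simp [*]

namespace OneSidedShuffle

variable {n : ℕ}

noncomputable def ofFun (P : Perm (Fin n) → ℝ) : MonoidAlgebra ℝ (Perm (Fin n)) :=
  ofCoeff (Finsupp.equivFunOnFinite.symm P)

@[simp] theorem coeff_ofFun (P : Perm (Fin n) → ℝ) : ⇑(ofFun P).coeff = P := rfl

@[simp] theorem ofFun_coeff (x : MonoidAlgebra ℝ (Perm (Fin n))) : ofFun ⇑x.coeff = x := by
  simp [ofFun, ofCoeff_coeff]

theorem convol_eq_coeff_mul (P Q : Perm (Fin n) → ℝ) :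
    convol P Q = ⇑(ofFun P * ofFun Q).coeff := by
  ext g
  rw [coeff_mul_apply_eq_sum]
  rfl

theorem convPow_eq_coeff_pow (P : Perm (Fin n) → ℝ) (t : ℕ) :
    convPow P t = ⇑(ofFun P ^ t).coeff := by
  induction t with
  | zero =>
    ext g
    rw [convPow, pow_zero, coeff_one_apply]
  | succ t ih =>
    rw [convPow, ih, pow_succ', convol_eq_coeff_mul, ofFun_coeff]

noncomputable def randomSwap (j : Fin n) : MonoidAlgebra ℝ (Perm (Fin n)) :=
  ∑ i ∈ Iic j, single (swap i j) ((j : ℝ) + 1)⁻¹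

theorem coeff_randomSwap_nonneg (j : Fin n) (g : Perm (Fin n)) : 0 ≤ (randomSwap j).coeff g := by
  simp only [randomSwap, coeff_sum, Finset.sum_apply', coeff_single, Finsupp.single_apply]
  exact sum_nonneg fun i _ => by split_ifs <;> positivity

theorem sum_coeff_randomSwap (j : Fin n) : ∑ g, (randomSwap j).coeff g = 1 := by
  simp only [randomSwap, coeff_sum, Finset.sum_apply', coeff_single]
  rw [sum_comm]
  simp only [Finsupp.single_apply, sum_ite_eq, mem_univ, if_true, sum_const, Fin.card_Iic,
    nsmul_eq_mul]
  push_cast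
  exact mul_inv_cancel₀ (by positivity)

theorem randomSwap_commute_of_lt {j k : Fin n} (hjk : j < k) :
    Commute (randomSwap j) (randomSwap k) := by
  simp only [Commute, SemiconjBy, randomSwap, sum_mul_sum, single_mul_single]
  rw [sum_comm (s := Iic k)]
  refine sum_congr rfl fun i hi => ?_
  have hik : i < k := (mem_Iic.1 hi).trans_lt hjk
  -- `swap i j` conjugates `swap l k` to `swap (swap i j l) k`, since it fixes `k`.
  have hconj (l : Fin n) : swap i j * swap l k = swap (swap i j l) k * swap i j := by
    rw [mul_swap_eq_swap_mul, swap_apply_of_ne_of_ne hik.ne' hjk.ne']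
  simp_rw [hconj, mul_comm ((k : ℝ) + 1)⁻¹]
  refine sum_equiv (swap i j) (fun l => ?_) fun _ _ => rfl
  simp only [mem_Iic, swap_apply_le_iff hik.le hjk.le]

theorem randomSwap_commute (j k : Fin n) : Commute (randomSwap j) (randomSwap k) := by
  rcases lt_trichotomy j k with h | rfl | h
  · exact randomSwap_commute_of_lt h
  · exact Commute.refl _
  · exact (randomSwap_commute_of_lt h).symm

noncomputable def uniformBelow (n K : ℕ) : MonoidAlgebra ℝ (Perm (Fin n)) :=
  ofFun fun σ => if ∀ m : Fin n, K ≤ (m : ℕ) → σ m = m then (K.factorial : ℝ)⁻¹ else 0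

theorem uniformBelow_zero : uniformBelow n 0 = 1 := by
  ext σ
  simp [uniformBelow, coeff_one_apply, Perm.ext_iff]

theorem coeff_uniformBelow_self (σ : Perm (Fin n)) :
    (uniformBelow n n).coeff σ = (n.factorial : ℝ)⁻¹ := by
  simp [uniformBelow]

theorem uniformBelow_self_mul_randomSwap (j : Fin n) :
    uniformBelow n n * randomSwap j = uniformBelow n n := by
  ext σ
  simp only [coeff_mul_apply_eq_sum, coeff_uniformBelow_self, ← mul_sum, sum_coeff_randomSwap,
    mul_one]

theorem swap_mul_fixes_iff {k i : Fin n} (hi : i ≤ k) (σ : Perm (Fin n)) :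
    (∀ m : Fin n, (k : ℕ) ≤ m → (swap i k * σ) m = m) ↔
      (∀ m : Fin n, (k : ℕ) + 1 ≤ m → σ m = m) ∧ σ k = i := by
  have hi' : (i : ℕ) ≤ k := hi
  constructor
  · intro h
    have hσ : σ = swap i k * (swap i k * σ) := by rw [← mul_assoc, swap_mul_self, one_mul]
    refine ⟨fun m hm => ?_, ?_⟩
    · rw [hσ, Perm.mul_apply, h m (by omega)]
      exact swap_apply_of_ne_of_ne (by rintro rfl; omega) (by rintro rfl; omega)
    · rw [hσ, Perm.mul_apply, h k le_rfl, swap_apply_right]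
  · rintro ⟨h, rfl⟩ m hm
    rcases hm.eq_or_lt with hmk | hmk
    · rw [Fin.ext hmk.symm, Perm.mul_apply, swap_apply_left]
    · rw [Perm.mul_apply, h m hmk, swap_apply_of_ne_of_ne]
      · rintro rfl; omega
      · rintro rfl; omega

theorem randomSwap_mul_uniformBelow (k : Fin n) :
    randomSwap k * uniformBelow n k = uniformBelow n (k + 1) := by
  ext σ
  simp only [randomSwap, sum_mul, coeff_sum, Finset.sum_apply', coeff_single_mul_apply, swap_inv,
    uniformBelow, coeff_ofFun]
  rw [sum_congr rfl fun i hi => by rw [if_congr (swap_mul_fixes_iff (mem_Iic.1 hi) σ) rfl rfl]]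
  simp only [ite_and, mul_ite, mul_zero]
  split_ifs with hfix
  · have hσk : σ k ∈ Iic k :=
      mem_Iic.2 (not_lt.1 fun hlt => hlt.ne' (σ.injective (hfix _ (Nat.succ_le_of_lt hlt))))
    rw [sum_ite_eq, if_pos hσk, Nat.factorial_succ, Nat.cast_mul, mul_inv]
    push_cast
    ring
  · exact sum_const_zero

noncomputable abbrev SwapAlgebra (n : ℕ) : Subalgebra ℝ (MonoidAlgebra ℝ (Perm (Fin n))) :=
  Algebra.adjoin ℝ (Set.range randomSwap)

instance : IsMulCommutative (SwapAlgebra n) :=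
  Algebra.isMulCommutative_adjoin ℝ <| by
    rintro _ ⟨j, rfl⟩ _ ⟨k, rfl⟩
    exact randomSwap_commute j k

open scoped IsMulCommutative

namespace SwapAlgebra

noncomputable def step (j : Fin n) : SwapAlgebra n :=
  ⟨randomSwap j, Algebra.subset_adjoin ⟨j, rfl⟩⟩

theorem coe_prod_step_lt {K : ℕ} (hK : K ≤ n) :
    ((∏ j ∈ univ.filter (fun j : Fin n => (j : ℕ) < K), step j : SwapAlgebra n) :
      MonoidAlgebra ℝ (Perm (Fin n))) = uniformBelow n K := by
  induction K with
  | zero => simp [uniformBelow_zero]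
  | succ K ih =>
    have hfilter : univ.filter (fun j : Fin n => (j : ℕ) < K + 1) =
        insert ⟨K, hK⟩ (univ.filter fun j : Fin n => (j : ℕ) < K) := by
      ext j
      simp only [mem_filter, mem_univ, true_and, mem_insert, Fin.ext_iff]
      omega
    rw [hfilter, prod_insert (by simp), Subalgebra.coe_mul, ih (by omega)]
    exact randomSwap_mul_uniformBelow ⟨K, hK⟩

theorem coe_prod_step_comp_of_surjective {t : ℕ} {f : Fin t → Fin n}
    (hf : Function.Surjective f) :
    ((∏ i, step (f i) : SwapAlgebra n) : MonoidAlgebra ℝ (Perm (Fin n))) = uniformBelow n n := by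
  have hall : ((∏ j, step j : SwapAlgebra n) : MonoidAlgebra ℝ (Perm (Fin n))) =
      uniformBelow n n := by
    rw [← coe_prod_step_lt le_rfl]
    congr 2
    simp
  rw [hf.prod_comp_eq_of_absorbing fun j => Subtype.ext ?_, hall]
  rw [Subalgebra.coe_mul, hall]
  exact uniformBelow_self_mul_randomSwap j

theorem coeff_prod_step_nonneg {ι : Type*} (s : Finset ι) (f : ι → Fin n) (g : Perm (Fin n)) :
    0 ≤ ((∏ i ∈ s, step (f i) : SwapAlgebra n) : MonoidAlgebra ℝ (Perm (Fin n))).coeff g := by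
  refine prod_induction (fun i => step (f i))
    (fun a : SwapAlgebra n => ∀ g, 0 ≤ (a : MonoidAlgebra ℝ (Perm (Fin n))).coeff g)
    (fun a b ha hb => coeff_mul_nonneg ha hb) (fun g => ?_)
    (fun i _ => coeff_randomSwap_nonneg (f i)) g
  rw [OneMemClass.coe_one, coeff_one_apply]
  positivity

end SwapAlgebra

theorem Nalpha_eq_sum_fin (α : ℝ) (n : ℕ) : Nalpha α n = ∑ j : Fin n, ((j : ℝ) + 1) ^ α := by
  induction n with
  | zero => simp [Nalpha]
  | succ n ih =>
    rw [Nalpha, sum_Icc_succ_top (by omega), ← Nalpha, ih, Fin.sum_univ_castSucc]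
    simp

theorem Nalpha_pos (α : ℝ) (hn : 1 ≤ n) : 0 < Nalpha α n := by
  have : Nonempty (Fin n) := ⟨⟨0, hn⟩⟩
  rw [Nalpha_eq_sum_fin]
  exact sum_pos (fun j _ => by positivity) univ_nonempty

theorem Nalpha_nonneg (α : ℝ) (n : ℕ) : 0 ≤ Nalpha α n := by
  rw [Nalpha_eq_sum_fin]
  exact sum_nonneg fun j _ => by positivity

noncomputable def weight (n : ℕ) (α : ℝ) (j : Fin n) : ℝ := ((j : ℝ) + 1) ^ α / Nalpha α n

theorem weight_nonneg (α : ℝ) (j : Fin n) : 0 ≤ weight n α j :=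
  div_nonneg (by positivity) (Nalpha_nonneg α n)

theorem sum_weight (α : ℝ) (hn : 1 ≤ n) : ∑ j, weight n α j = 1 := by
  simp only [weight]
  rw [← sum_div, ← Nalpha_eq_sum_fin, div_self (Nalpha_pos α hn).ne']

theorem weight_le_one (α : ℝ) (hn : 1 ≤ n) (j : Fin n) : weight n α j ≤ 1 :=
  sum_weight α hn ▸ single_le_sum (fun k _ => weight_nonneg α k) (mem_univ j)

theorem le_weight {α : ℝ} (hα : α ≤ 0) (j : Fin n) : (n : ℝ) ^ α / Nalpha α n ≤ weight n α j := by
  have hj : (j : ℝ) + 1 ≤ n := by exact_mod_cast j.isLt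
  exact div_le_div_of_nonneg_right (Real.rpow_le_rpow_of_nonpos (by positivity) hj hα)
    (Nalpha_nonneg α n)

theorem ofFun_OSTb (α : ℝ) : ofFun (OSTb n α) = ∑ j, weight n α j • randomSwap j := by
  ext σ
  simp only [coeff_ofFun, OSTb, coeff_sum, Finset.sum_apply', coeff_smul, Finsupp.smul_apply,
    randomSwap, coeff_single, Finsupp.single_apply, smul_eq_mul, mul_sum]
  refine sum_congr rfl fun j _ => ?_
  rw [← filter_ge_eq_Iic, sum_filter]
  refine sum_congr rfl fun i _ => ?_
  by_cases hij : i ≤ j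
  · by_cases hσ : σ = swap i j
    · have hj : (0 : ℝ) < (j : ℝ) + 1 := by positivity
      simp only [hij, hσ, and_self, if_true, weight, Real.rpow_sub_one hj.ne']
      ring
    · simp [hij, hσ, Ne.symm hσ]
  · simp [hij]

theorem convPow_OSTb_apply (α : ℝ) (t : ℕ) (σ : Perm (Fin n)) :
    convPow (OSTb n α) t σ = ∑ f : Fin t → Fin n, (∏ i, weight n α (f i)) *
      ((∏ i, SwapAlgebra.step (f i) : SwapAlgebra n) : MonoidAlgebra ℝ (Perm (Fin n))).coeff σ := by
  have hOST : ofFun (OSTb n α) = ((∑ j, weight n α j • SwapAlgebra.step j : SwapAlgebra n) :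
      MonoidAlgebra ℝ (Perm (Fin n))) := by
    rw [ofFun_OSTb]
    simp [SwapAlgebra.step]
  rw [convPow_eq_coeff_pow, hOST, ← SubmonoidClass.coe_pow, Fintype.sum_pow]
  simp [prod_smul, coeff_sum]

theorem le_convPow_OSTb (α : ℝ) (hn : 1 ≤ n) (t : ℕ) (σ : Perm (Fin n)) :
    (1 - ∑ j, (1 - weight n α j) ^ t) / n.factorial ≤ convPow (OSTb n α) t σ := by
  set W : (Fin t → Fin n) → ℝ := fun f => ∏ i, weight n α (f i)
  have hW (f : Fin t → Fin n) : 0 ≤ W f := prod_nonneg fun i _ => weight_nonneg α (f i)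
  have hsurj : 1 - ∑ j, (1 - weight n α j) ^ t ≤ ∑ f with Function.Surjective f, W f := by
    have hsum : ∑ f, W f = 1 := by rw [← Fintype.sum_pow, sum_weight α hn, one_pow]
    have hsplit := sum_filter_add_sum_filter_not univ Function.Surjective W
    have hmiss : ∑ f with ¬ Function.Surjective f, W f ≤ ∑ j, (1 - weight n α j) ^ t :=
      sum_prod_not_surjective_le (weight_nonneg α) (sum_weight α hn) t
    linarith
  rw [convPow_OSTb_apply]
  calc (1 - ∑ j, (1 - weight n α j) ^ t) / n.factorial
      ≤ ∑ f with Function.Surjective f, W f * (n.factorial : ℝ)⁻¹ := by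
        rw [← sum_mul, div_eq_mul_inv]
        exact mul_le_mul_of_nonneg_right hsurj (by positivity)
    _ = ∑ f with Function.Surjective f, W f *
          ((∏ i, SwapAlgebra.step (f i) : SwapAlgebra n) :
            MonoidAlgebra ℝ (Perm (Fin n))).coeff σ := by
        refine sum_congr rfl fun f hf => ?_
        rw [SwapAlgebra.coe_prod_step_comp_of_surjective (mem_filter.1 hf).2,
          coeff_uniformBelow_self]
    _ ≤ _ := sum_le_sum_of_subset_of_nonneg (filter_subset _ _) fun f _ _ =>
        mul_nonneg (hW f) (SwapAlgebra.coeff_prod_step_nonneg _ _ σ)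

theorem sum_one_sub_weight_pow_le {α : ℝ} (hα : α ≤ 0) (hn : 1 ≤ n) {c : ℝ} {t : ℕ}
    (ht : Nalpha α n / (n : ℝ) ^ α * (Real.log n + c) ≤ t) :
    ∑ j, (1 - weight n α j) ^ t ≤ Real.exp (-c) := by
  have hn0 : (0 : ℝ) < n := by exact_mod_cast hn
  have hL : Real.log n + c ≤ t * ((n : ℝ) ^ α / Nalpha α n) := by
    rw [div_mul_eq_mul_div, div_le_iff₀ (by positivity)] at ht
    rw [← mul_div_assoc, le_div_iff₀ (Nalpha_pos α hn)]
    linarith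
  have hterm (j : Fin n) : (1 - weight n α j) ^ t ≤ Real.exp (-c) / n :=
    calc (1 - weight n α j) ^ t ≤ Real.exp (-(t * weight n α j)) :=
          one_sub_pow_le_exp_neg_mul (weight_le_one α hn j) t
      _ ≤ Real.exp (-(Real.log n + c)) := by
          have := mul_le_mul_of_nonneg_left (le_weight hα j) (Nat.cast_nonneg t)
          exact Real.exp_le_exp.2 (by linarith)
      _ = Real.exp (-c) / n := by
          rw [neg_add, Real.exp_add, Real.exp_neg, Real.exp_log hn0]
          ring
  calc ∑ j, (1 - weight n α j) ^ t ≤ ∑ _j : Fin n, Real.exp (-c) / n :=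
        sum_le_sum fun j _ => hterm j
    _ = Real.exp (-c) := by
        rw [sum_const, card_univ, Fintype.card_fin, nsmul_eq_mul]
        field_simp

end OneSidedShuffle

theorem ostb_sep_upper_general (α : ℝ) (hα : α ≤ 0) (n : ℕ) (hn : 1 ≤ n) (c : ℝ)
    (t : ℕ) (ht : Nalpha α n / (n : ℝ) ^ α * (Real.log n + c) ≤ (t : ℝ)) :
    sepDist (convPow (OSTb n α) t) ≤ Real.exp (-c) := by
  have hsum := OneSidedShuffle.sum_one_sub_weight_pow_le hα hn ht
  refine ciSup_le fun σ => ?_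
  have hσ := OneSidedShuffle.le_convPow_OSTb α hn t σ
  rw [div_le_iff₀ (by positivity)] at hσ
  linarith

/-- Separation-distance upper bound for biased one-sided transposition shuffles with
`α ≤ 0`: for `n ≥ 1`, `c > 0`, and every `t ≥ (N_α(n)/n^α)(log n + c)`,
`sep(OST_{n,α}^t) ≤ e^{−c}`. -/
theorem ostb_sep_upper (α : ℝ) (hα : α ≤ 0) (n : ℕ) (hn : 1 ≤ n) (c : ℝ) (hc : 0 < c)
    (t : ℕ) (ht : Nalpha α n / (n : ℝ) ^ α * (Real.log n + c) ≤ (t : ℝ)) :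
    sepDist (convPow (OSTb n α) t) ≤ Real.exp (-c) :=
  ostb_sep_upper_general α hα n hn c t ht
end

section
/- Master equation for lifting eigenvectors of the one-sided transposition shuffle: fix n ≥ 1 and work over a field of characteristic zero. Let M_m denote the free vector space with basis the words of length m over the alphabet of positive integers, with S_m acting by place permutations, (σ·w)_k = w_{σ⁻¹(k)}, extended linearly. Let AOST_m : M_m → M_m be the linear map w ↦ Σ_{1≤i≤j≤m} (1/j)·((i j)·w), where (i i) denotes the identity permutation, and for a letter a let Φ_a : M_m → M_{m+1} be the linear map appending a: Φ_a(w) = w₁…w_m a. Then for every letter a and every word w of length n: AOST_{n+1}(Φ_a(w)) − Φ_a(AOST_n(w)) = (1/(n+1))·Φ_a(w) + (1/(n+1))·Σ_{k=1}^{n} Φ_{w_k}(w^{(k→a)}), where w^{(k→a)} denotes the word w with its k-th letter replaced by a; equivalently, AOST_{n+1}∘Φ_a − Φ_a∘AOST_n = (1/(n+1))·Φ_a + (1/(n+1))·Σ_b Φ_b∘Θ_{b,a}, with Θ_{b,a}(w) = Σ_{k : w_k = b} w^{(k→a)} the switching operator. -/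
open scoped BigOperators

/-- The algebraic one-sided transposition shuffle acting on the free `K`-vector space
`M_m` with basis the words of length `m` over the alphabet of positive integers
(`S_m` acts by place permutations, `(σ·w)_k = w_{σ⁻¹(k)}`):
`AOSTw K m (w) = ∑_{1≤i≤j≤m} (1/j)·((i j)·w)`, extended linearly.  (With 0-indexed
positions `i, j : Fin m`, the weight of the pair is `1/(j+1)`, and `(i j)·w = w ∘ swap i j`
since a transposition is its own inverse.) -/
noncomputable def AOSTw (K : Type) [Field K] (m : ℕ) :
    ((Fin m → ℕ+) →₀ K) →ₗ[K] ((Fin m → ℕ+) →₀ K) :=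
  ∑ j : Fin m, ∑ i : Fin m,
    if i ≤ j then
      ((((j : ℕ) : K) + 1))⁻¹ •
        Finsupp.lmapDomain K K (fun w : Fin m → ℕ+ => fun k => w (Equiv.swap i j k))
    else 0

/-- The adding operator `Φ_a : M_m → M_{m+1}`, appending the letter `a` to a word,
extended linearly. -/
noncomputable def PhiW (K : Type) [Field K] (m : ℕ) (a : ℕ+) :
    ((Fin m → ℕ+) →₀ K) →ₗ[K] ((Fin (m + 1) → ℕ+) →₀ K) :=
  Finsupp.lmapDomain K K (fun w : Fin m → ℕ+ => Fin.snoc w a)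

lemma swap_castSucc_apply {n : ℕ} (i j k : Fin n) :
    Equiv.swap (Fin.castSucc i) (Fin.castSucc j) (Fin.castSucc k)
      = Fin.castSucc (Equiv.swap i j k) := by
  rcases eq_or_ne k i with rfl | hi
  · simp
  rcases eq_or_ne k j with rfl | hj
  · simp
  rw [Equiv.swap_apply_of_ne_of_ne (by simpa [Fin.castSucc_inj] using hi)
      (by simpa [Fin.castSucc_inj] using hj),
    Equiv.swap_apply_of_ne_of_ne hi hj]

lemma snoc_swap_castSucc {n : ℕ} (w : Fin n → ℕ+) (a : ℕ+) (i j : Fin n) :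
    (fun k => (Fin.snoc w a : Fin (n+1) → ℕ+) (Equiv.swap (Fin.castSucc i) (Fin.castSucc j) k))
      = Fin.snoc (fun k => w (Equiv.swap i j k)) a := by
  funext k
  induction k using Fin.lastCases with
  | last =>
      rw [Equiv.swap_apply_of_ne_of_ne (Fin.castSucc_lt_last i).ne' (Fin.castSucc_lt_last j).ne']
      simp
  | cast k => rw [swap_castSucc_apply]; simp

lemma snoc_swap_last {n : ℕ} (w : Fin n → ℕ+) (a : ℕ+) (k : Fin n) :
    (fun m => (Fin.snoc w a : Fin (n+1) → ℕ+) (Equiv.swap (Fin.castSucc k) (Fin.last n) m))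
      = Fin.snoc (Function.update w k a) (w k) := by
  funext m
  induction m using Fin.lastCases with
  | last => simp [Equiv.swap_apply_right]
  | cast m =>
      rcases eq_or_ne m k with rfl | h
      · simp [Equiv.swap_apply_left]
      · rw [Equiv.swap_apply_of_ne_of_ne (by simpa [Fin.castSucc_inj] using h)
          (Fin.castSucc_lt_last m).ne]
        simp [Function.update_of_ne h]

lemma AOSTw_single (K : Type) [Field K] (m : ℕ) (w : Fin m → ℕ+) :
    AOSTw K m (Finsupp.single w 1) =
      ∑ j : Fin m, ∑ i : Fin m,
        if i ≤ j then
          ((((j : ℕ) : K) + 1))⁻¹ •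
            Finsupp.single (fun k => w (Equiv.swap i j k)) (1 : K)
        else 0 := by
  rw [AOSTw]
  simp only [LinearMap.sum_apply]
  refine Finset.sum_congr rfl fun j _ => Finset.sum_congr rfl fun i _ => ?_
  split_ifs with h
  · rw [LinearMap.smul_apply, Finsupp.lmapDomain_apply, Finsupp.mapDomain_single]
  · rfl

lemma PhiW_single (K : Type) [Field K] (m : ℕ) (a : ℕ+) (u : Fin m → ℕ+) :
    PhiW K m a (Finsupp.single u (1 : K)) = Finsupp.single (Fin.snoc u a) 1 := by
  rw [PhiW, Finsupp.lmapDomain_apply, Finsupp.mapDomain_single]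

/-- Master equation for lifting eigenvectors of the one-sided transposition shuffle:
for every letter `a` and word `w` of length `n ≥ 1`,
`AOST_{n+1}(Φ_a(w)) − Φ_a(AOST_n(w)) = (1/(n+1))·Φ_a(w) + (1/(n+1))·∑_{k=1}^n Φ_{w_k}(w^{(k→a)})`,
where `w^{(k→a)}` is `w` with its `k`-th letter replaced by `a`. -/
theorem master_equation (K : Type) [Field K] [CharZero K] (n : ℕ) (hn : 1 ≤ n)
    (a : ℕ+) (w : Fin n → ℕ+) :
    AOSTw K (n + 1) (PhiW K n a (Finsupp.single w 1)) -
        PhiW K n a (AOSTw K n (Finsupp.single w 1)) =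
      (((n : K) + 1))⁻¹ • PhiW K n a (Finsupp.single w 1) +
        (((n : K) + 1))⁻¹ •
          ∑ k : Fin n, PhiW K n (w k) (Finsupp.single (Function.update w k a) 1) := by
  rw [PhiW_single, AOSTw_single, AOSTw_single]
  simp only [map_sum, apply_ite (PhiW K n a), map_smul, map_zero, PhiW_single]
  have hmid : ∀ j : Fin n,
      (∑ i : Fin (n+1),
          if i ≤ Fin.castSucc j then
            ((((Fin.castSucc j : Fin (n+1)) : ℕ) : K) + 1)⁻¹ •
              Finsupp.single
                (fun k => (Fin.snoc w a : Fin (n+1) → ℕ+)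
                  (Equiv.swap i (Fin.castSucc j) k)) (1 : K)
          else 0)
        = ∑ i : Fin n,
            if i ≤ j then
              (((j : ℕ) : K) + 1)⁻¹ •
                Finsupp.single (Fin.snoc (fun k => w (Equiv.swap i j k)) a) (1 : K)
            else 0 := by
    intro j
    rw [Fin.sum_univ_castSucc,
      if_neg (by simp [Fin.last_le_iff, (Fin.castSucc_lt_last j).ne]), add_zero]
    refine Finset.sum_congr rfl fun i _ => ?_
    rw [snoc_swap_castSucc]
    simp [Fin.castSucc_le_castSucc_iff]
  have hlast :
      (∑ i : Fin (n+1),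
          if i ≤ Fin.last n then
            ((((Fin.last n) : ℕ) : K) + 1)⁻¹ •
              Finsupp.single
                (fun k => (Fin.snoc w a : Fin (n+1) → ℕ+)
                  (Equiv.swap i (Fin.last n) k)) (1 : K)
          else 0)
        = (((n : K) + 1))⁻¹ • Finsupp.single (Fin.snoc w a) (1 : K) +
            (((n : K) + 1))⁻¹ •
              ∑ k : Fin n, Finsupp.single (Fin.snoc (Function.update w k a) (w k)) (1 : K) := by
    rw [Fin.sum_univ_castSucc, if_pos le_rfl, Finset.smul_sum]
    have h1 : ((((Fin.last n) : ℕ) : K) + 1)⁻¹ •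
        Finsupp.single
          (fun k => (Fin.snoc w a : Fin (n+1) → ℕ+)
            (Equiv.swap (Fin.last n) (Fin.last n) k)) (1 : K)
        = (((n : K) + 1))⁻¹ • Finsupp.single (Fin.snoc w a) (1 : K) := by
      simp
    have h2 : ∀ i : Fin n,
        (if Fin.castSucc i ≤ Fin.last n then
            ((((Fin.last n) : ℕ) : K) + 1)⁻¹ •
              Finsupp.single
                (fun k => (Fin.snoc w a : Fin (n+1) → ℕ+)
                  (Equiv.swap (Fin.castSucc i) (Fin.last n) k)) (1 : K)
          else 0)
          = (((n : K) + 1))⁻¹ •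
              Finsupp.single (Fin.snoc (Function.update w i a) (w i)) (1 : K) := by
      intro i
      rw [if_pos (Fin.le_last _), snoc_swap_last]
      simp
    rw [h1, Finset.sum_congr rfl fun i _ => h2 i]
    exact add_comm _ _
  rw [Fin.sum_univ_castSucc]
  have h3 : (∑ j : Fin n, ∑ i : Fin (n+1),
      if i ≤ Fin.castSucc j then
        ((((Fin.castSucc j : Fin (n+1)) : ℕ) : K) + 1)⁻¹ •
          Finsupp.single
            (fun k => (Fin.snoc w a : Fin (n+1) → ℕ+)
              (Equiv.swap i (Fin.castSucc j) k)) (1 : K)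
      else 0)
      = ∑ j : Fin n, ∑ i : Fin n,
          if i ≤ j then
            (((j : ℕ) : K) + 1)⁻¹ •
              Finsupp.single (Fin.snoc (fun k => w (Equiv.swap i j k)) a) (1 : K)
          else 0 := Finset.sum_congr rfl fun j _ => hmid j
  rw [h3, hlast, add_sub_cancel_left, Finset.smul_sum]
end
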